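/- arXiv:2110.03418 — 9 statements merged into one kernel-verified Lean document; each statement's English description precedes it below -/
import Mathlib

section
/- Let V be a commutative algebra with an infinite-order automorphism S, equipped with a multiplicative Poisson vertex algebra structure, i.e. a λ-bracket {a_λ b} ∈ V[λ,λ⁻¹] satisfying sesquilinearity ({S(a)_λ b} = λ⁻¹{a_λ b}, {a_λ S(b)} = λ S({a_λ b})), left and right Leibniz rules, skewsymmetry {a_λ b} = −(substituting x = S){b_{λ⁻¹x⁻¹} a}, and the Jacobi identity. Then the bracket {a,b} := res_λ {a_λ b} (the coefficient of λ⁰) makes V into a local lattice Poisson algebra: it is a Poisson bracket, S is an automorphism of the bracket, and for every a,b ∈ V one has {Sⁿ(a), b} = 0 for all but finitely many n ∈ ℤ. -/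
/-- A multiplicative Poisson vertex algebra structure (encoded by its
λ-bracket coefficients `B n a b`, so that `{a_λ b} = Σₙ λⁿ B n a b`) on a commutative
algebra `V` with an infinite-order automorphism `S` induces, via the multiplicative
residue `{a,b} := B 0 a b`, the structure of a local lattice Poisson algebra. -/
theorem stmt0 {k V : Type*} [Field k] [CharZero k] [CommRing V] [Algebra k V]
    (S : V ≃ₐ[k] V)
    (hS : ∀ n : ℤ, n ≠ 0 → (S ^ n : V ≃ₐ[k] V) ≠ 1)
    (B : ℤ → V → V → V)
    (hadd1 : ∀ n a a' b, B n (a + a') b = B n a b + B n a' b)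
    (hadd2 : ∀ n a b b', B n a (b + b') = B n a b + B n a b')
    (hsmul1 : ∀ n (c : k) a b, B n (c • a) b = c • B n a b)
    (hsmul2 : ∀ n (c : k) a b, B n a (c • b) = c • B n a b)
    (hfin : ∀ a b, {n : ℤ | B n a b ≠ 0}.Finite)
    (hses1 : ∀ n a b, B n (S a) b = B (n + 1) a b)
    (hses2 : ∀ n a b, B n a (S b) = S (B (n - 1) a b))
    (hleibL : ∀ n a b c, B n a (b * c) = B n a b * c + b * B n a c)
    (hleibR : ∀ n a b c, B n (a * b) c
      = B n a c * (S ^ n : V ≃ₐ[k] V) b + (S ^ n : V ≃ₐ[k] V) a * B n b c)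
    (hskew : ∀ n a b, B n a b = - (S ^ n : V ≃ₐ[k] V) (B (-n) b a))
    (hjac : ∀ m n a b c,
      B m a (B n b c) - B n b (B m a c) - B n (B (m - n) a b) c = 0) :
    -- skewsymmetry of the residue bracket
    (∀ a b, B 0 a b = - B 0 b a) ∧
    -- left Leibniz rule
    (∀ a b c, B 0 a (b * c) = B 0 a b * c + b * B 0 a c) ∧
    -- right Leibniz rule
    (∀ a b c, B 0 (a * b) c = B 0 a c * b + a * B 0 b c) ∧
    -- Jacobi identity
    (∀ a b c, B 0 a (B 0 b c) - B 0 b (B 0 a c) - B 0 (B 0 a b) c = 0) ∧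
    -- S is an automorphism of the bracket
    (∀ a b, S (B 0 a b) = B 0 (S a) (S b)) ∧
    -- locality
    (∀ a b, {n : ℤ | B 0 ((S ^ n : V ≃ₐ[k] V) a) b ≠ 0}.Finite) := by
  have hpow : ∀ (n : ℤ) (a b : V), B 0 ((S ^ n : V ≃ₐ[k] V) a) b = B n a b := by
    intro n
    induction n using Int.induction_on with
    | zero => intro a b; simp
    | succ m ih =>
        intro a b
        have : ((S ^ ((m : ℤ) + 1) : V ≃ₐ[k] V) a) = (S ^ (m : ℤ) : V ≃ₐ[k] V) (S a) := by
          rw [zpow_add_one]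
          rfl
        rw [this, ih, hses1]
    | pred m ih =>
        intro a b
        have key : B 0 ((S ^ (-(m : ℤ) - 1) : V ≃ₐ[k] V) a) b
            = B 0 ((S ^ (-(m : ℤ)) : V ≃ₐ[k] V) (S.symm a)) b := by
          congr 1
          rw [sub_eq_add_neg, zpow_add, zpow_neg_one]
          rfl
        rw [key, ih]
        have h := hses1 (-(m:ℤ) - 1) (S.symm a) b
        simp only [AlgEquiv.apply_symm_apply] at h
        rw [show (-(m:ℤ) - 1 + 1) = -(m:ℤ) by ring] at h
        exact h.symm
  refine ⟨?_, ?_, ?_, ?_, ?_, ?_⟩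
  · intro a b
    have := hskew 0 a b
    simpa using this
  · intro a b c; exact hleibL 0 a b c
  · intro a b c
    have := hleibR 0 a b c
    simpa using this
  · intro a b c
    have := hjac 0 0 a b c
    simpa using this
  · intro a b
    have h1 := hses1 0 a (S b)
    have h2 := hses2 1 a b
    norm_num at h1 h2
    rw [h1, h2]
  · intro a b
    have : {n : ℤ | B 0 ((S ^ n : V ≃ₐ[k] V) a) b ≠ 0} = {n : ℤ | B n a b ≠ 0} := by
      ext n; simp [hpow]
    rw [this]
    exact hfin a b
end

section
/- Let V be a commutative algebra with an infinite-order automorphism S making it a local lattice Poisson algebra (Poisson bracket {−,−} with S({a,b}) = {S(a),S(b)} and {Sⁿ(a),b} = 0 for all but finitely many n). Then the assignment {a_λ b} := Σ_{n∈ℤ} λⁿ {Sⁿ(a), b} defines a multiplicative Poisson vertex algebra structure on V: it is well-defined (finitely many nonzero terms), sesquilinear, satisfies left and right Leibniz rules, skewsymmetry, and the Jacobi identity {a_λ {b_μ c}} − {b_μ {a_λ c}} − {{a_λ b}_{λμ} c} = 0. -/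
/-- A local lattice Poisson algebra `(V, {-,-}, S)` gives rise to a
multiplicative Poisson vertex algebra via `{a_λ b} := Σₙ λⁿ {Sⁿ(a), b}`, encoded here
by its coefficients `B n a b := P (Sⁿ a) b`: these have finite support in `n`
(well-definedness) and satisfy sesquilinearity, both Leibniz rules, skewsymmetry
and the Jacobi identity. -/
theorem stmt1 {k V : Type*} [Field k] [CharZero k] [CommRing V] [Algebra k V]
    (S : V ≃ₐ[k] V)
    (hS : ∀ n : ℤ, n ≠ 0 → (S ^ n : V ≃ₐ[k] V) ≠ 1)
    (P : V → V → V)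
    (hadd1 : ∀ a a' b, P (a + a') b = P a b + P a' b)
    (hadd2 : ∀ a b b', P a (b + b') = P a b + P a b')
    (hsmul1 : ∀ (c : k) a b, P (c • a) b = c • P a b)
    (hsmul2 : ∀ (c : k) a b, P a (c • b) = c • P a b)
    (hskew : ∀ a b, P a b = - P b a)
    (hleib : ∀ a b c, P a (b * c) = P a b * c + b * P a c)
    (hjac : ∀ a b c, P a (P b c) - P b (P a c) - P (P a b) c = 0)
    (hSeq : ∀ a b, S (P a b) = P (S a) (S b))
    (hloc : ∀ a b, {n : ℤ | P ((S ^ n : V ≃ₐ[k] V) a) b ≠ 0}.Finite) :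
    -- well-definedness: finitely many nonzero coefficients
    (∀ a b, {n : ℤ | P ((S ^ n : V ≃ₐ[k] V) a) b ≠ 0}.Finite) ∧
    -- sesquilinearity in the first slot
    (∀ (n : ℤ) (a b : V),
      P ((S ^ n : V ≃ₐ[k] V) (S a)) b = P ((S ^ (n + 1) : V ≃ₐ[k] V) a) b) ∧
    -- sesquilinearity in the second slot
    (∀ (n : ℤ) (a b : V),
      P ((S ^ n : V ≃ₐ[k] V) a) (S b) = S (P ((S ^ (n - 1) : V ≃ₐ[k] V) a) b)) ∧
    -- left Leibniz rule
    (∀ (n : ℤ) (a b c : V),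
      P ((S ^ n : V ≃ₐ[k] V) a) (b * c)
        = P ((S ^ n : V ≃ₐ[k] V) a) b * c + b * P ((S ^ n : V ≃ₐ[k] V) a) c) ∧
    -- right Leibniz rule
    (∀ (n : ℤ) (a b c : V),
      P ((S ^ n : V ≃ₐ[k] V) (a * b)) c
        = P ((S ^ n : V ≃ₐ[k] V) a) c * (S ^ n : V ≃ₐ[k] V) b
          + (S ^ n : V ≃ₐ[k] V) a * P ((S ^ n : V ≃ₐ[k] V) b) c) ∧
    -- skewsymmetry
    (∀ (n : ℤ) (a b : V),
      P ((S ^ n : V ≃ₐ[k] V) a) b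
        = - (S ^ n : V ≃ₐ[k] V) (P ((S ^ (-n) : V ≃ₐ[k] V) b) a)) ∧
    -- Jacobi identity
    (∀ (m n : ℤ) (a b c : V),
      P ((S ^ m : V ≃ₐ[k] V) a) (P ((S ^ n : V ≃ₐ[k] V) b) c)
        - P ((S ^ n : V ≃ₐ[k] V) b) (P ((S ^ m : V ≃ₐ[k] V) a) c)
        - P ((S ^ n : V ≃ₐ[k] V) (P ((S ^ (m - n) : V ≃ₐ[k] V) a) b)) c = 0) := by

  -- S⁻¹ version of hSeq
  have hSeqInv : ∀ a b : V, (S⁻¹ : V ≃ₐ[k] V) (P a b) = P ((S⁻¹ : V ≃ₐ[k] V) a) ((S⁻¹ : V ≃ₐ[k] V) b) := by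
    intro a b
    have := hSeq ((S⁻¹ : V ≃ₐ[k] V) a) ((S⁻¹ : V ≃ₐ[k] V) b)
    simp only [show (S⁻¹ : V ≃ₐ[k] V) = S.symm from rfl] at this ⊢
    rw [S.apply_symm_apply, S.apply_symm_apply] at this
    have := congrArg S.symm this
    rw [S.symm_apply_apply] at this
    exact this.symm
  have key : ∀ (n : ℤ) (a b : V),
      (S ^ n : V ≃ₐ[k] V) (P a b) = P ((S ^ n : V ≃ₐ[k] V) a) ((S ^ n : V ≃ₐ[k] V) b) := by
    intro n
    induction n using Int.induction_on with
    | zero => intro a b; simp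
    | succ m ih =>
      intro a b
      have hp : (S ^ ((m : ℤ) + 1) : V ≃ₐ[k] V) = S * (S ^ (m : ℤ) : V ≃ₐ[k] V) := by
        rw [show (m : ℤ) + 1 = 1 + (m : ℤ) from add_comm _ _, zpow_one_add]
      simp only [hp, AlgEquiv.mul_apply, ih, hSeq]
    | pred m ih =>
      intro a b
      have hp : (S ^ (-(m : ℤ) - 1) : V ≃ₐ[k] V) = S⁻¹ * (S ^ (-(m : ℤ)) : V ≃ₐ[k] V) := by
        rw [show -(m : ℤ) - 1 = -1 + -(m : ℤ) by ring, zpow_add, zpow_neg_one]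
      simp only [hp, AlgEquiv.mul_apply, ih, hSeqInv]
  have hshift : ∀ (n : ℤ) (a : V), (S ^ n : V ≃ₐ[k] V) (S a) = (S ^ (n + 1) : V ≃ₐ[k] V) a := by
    intro n a
    have : (S ^ (n + 1) : V ≃ₐ[k] V) = (S ^ n : V ≃ₐ[k] V) * S := by rw [zpow_add_one]
    rw [this, AlgEquiv.mul_apply]
  refine ⟨hloc, fun n a b => congrArg (fun x => P x b) (hshift n a), ?_, ?_, ?_, ?_, ?_⟩
  · intro n a b
    have := hSeq ((S ^ (n - 1) : V ≃ₐ[k] V) a) b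
    rw [show S ((S ^ (n - 1) : V ≃ₐ[k] V) a) = (S ^ n : V ≃ₐ[k] V) a by
      rw [show S ((S ^ (n - 1) : V ≃ₐ[k] V) a) = (S ^ (n - 1) : V ≃ₐ[k] V) (S a) from ?_, hshift, sub_add_cancel]
      · rw [← AlgEquiv.mul_apply, ← AlgEquiv.mul_apply, ← zpow_one_add, ← zpow_add_one, add_comm]] at this
    exact this.symm
  · intro n a b c; exact hleib _ b c
  · intro n a b c
    rw [map_mul, hskew, hleib, neg_add, hskew c ((S ^ n : V ≃ₐ[k] V) a),
      hskew c ((S ^ n : V ≃ₐ[k] V) b)]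
    ring
  · intro n a b
    rw [key n ((S ^ (-n) : V ≃ₐ[k] V) b) a]
    have : (S ^ n : V ≃ₐ[k] V) ((S ^ (-n) : V ≃ₐ[k] V) b) = b := by
      rw [← AlgEquiv.mul_apply, ← zpow_add, add_neg_cancel, zpow_zero, AlgEquiv.one_apply]
    rw [this, hskew]
  · intro m n a b c
    rw [key n ((S ^ (m - n) : V ≃ₐ[k] V) a) b]
    have : (S ^ n : V ≃ₐ[k] V) ((S ^ (m - n) : V ≃ₐ[k] V) a) = (S ^ m : V ≃ₐ[k] V) a := by
      rw [← AlgEquiv.mul_apply, ← zpow_add, add_sub_cancel]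
    rw [this]
    exact hjac _ _ _
end

section
/- Let 𝒱 be a unital associative algebra with automorphism S and a double multiplicative Poisson vertex algebra structure ⟨⟨−_λ−⟩⟩: 𝒱×𝒱 → (𝒱⊗𝒱)[λ,λ⁻¹]. Then the double bracket ⟨⟨a,b⟩⟩ := res_λ ⟨⟨a_λ b⟩⟩ (coefficient of λ⁰) makes 𝒱 a local lattice double Poisson algebra: ⟨⟨−,−⟩⟩ is cyclically skewsymmetric, satisfies the left and right Leibniz rules and the double Jacobi identity, S(⟨⟨a,b⟩⟩) = ⟨⟨S(a),S(b)⟩⟩, and ⟨⟨Sⁿ(a),b⟩⟩ = 0 for all but finitely many n ∈ ℤ. -/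
open TensorProduct

/-- A double multiplicative Poisson vertex algebra (encoded by the
coefficients `D n a b` of the double λ-bracket `⟨⟨a_λ b⟩⟩ = Σₙ λⁿ D n a b`, with its
left/right/"first-slot" extensions `DL`, `DR`, `DT` to tensors) induces, via the
multiplicative residue `⟨⟨a,b⟩⟩ := D 0 a b`, a local lattice double Poisson algebra
structure: cyclic skewsymmetry, both Leibniz rules, the double Jacobi identity,
`S`-equivariance, and locality. -/
theorem stmt6 {k V : Type*} [Field k] [CharZero k] [Ring V] [Algebra k V]
    (S : V ≃ₐ[k] V)
    (hS : ∀ n : ℤ, n ≠ 0 → (S ^ n : V ≃ₐ[k] V) ≠ 1)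
    (D : ℤ → V →ₗ[k] V →ₗ[k] V ⊗[k] V)
    (hfin : ∀ a b : V, {n : ℤ | D n a b ≠ 0}.Finite)
    (hses1 : ∀ (n : ℤ) (a b : V), D n (S a) b = D (n + 1) a b)
    (hses2 : ∀ (n : ℤ) (a b : V),
      D n a (S b)
        = (TensorProduct.congr S.toLinearEquiv S.toLinearEquiv) (D (n - 1) a b))
    (hleibL : ∀ (n : ℤ) (a b c : V),
      D n a (b * c) = D n a b * (1 ⊗ₜ[k] c) + (b ⊗ₜ[k] 1) * D n a c)
    (hleibR : ∀ (n : ℤ) (a b c : V),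
      D n (a * b) c
        = D n a c * (((S ^ n : V ≃ₐ[k] V) b) ⊗ₜ[k] 1)
          + (1 ⊗ₜ[k] ((S ^ n : V ≃ₐ[k] V) a)) * D n b c)
    (hskew : ∀ (n : ℤ) (a b : V),
      D n a b
        = - (TensorProduct.congr (S ^ n : V ≃ₐ[k] V).toLinearEquiv
              (S ^ n : V ≃ₐ[k] V).toLinearEquiv)
            ((TensorProduct.comm k V V) (D (-n) b a)))
    (DL DR DT : ℤ → V → (V ⊗[k] V) →ₗ[k] V ⊗[k] (V ⊗[k] V))
    (hDL : ∀ (n : ℤ) (a x y : V),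
      DL n a (x ⊗ₜ[k] y) = (TensorProduct.assoc k V V V) ((D n a x) ⊗ₜ[k] y))
    (hDR : ∀ (n : ℤ) (a x y : V), DR n a (x ⊗ₜ[k] y) = x ⊗ₜ[k] (D n a y))
    (hDT : ∀ (n : ℤ) (c x y : V),
      DT n c (x ⊗ₜ[k] y)
        = (TensorProduct.congr (LinearEquiv.refl k V) (TensorProduct.comm k V V))
            ((TensorProduct.assoc k V V V)
              ((D n x c) ⊗ₜ[k] ((S ^ n : V ≃ₐ[k] V) y))))
    (hjac : ∀ (m n : ℤ) (a b c : V),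
      DL m a (D n b c) - DR n b (D m a c) - DT n c (D (m - n) a b) = 0) :
    -- cyclic skewsymmetry of the residue double bracket
    (∀ a b : V, D 0 a b = - (TensorProduct.comm k V V) (D 0 b a)) ∧
    -- left Leibniz rule
    (∀ a b c : V,
      D 0 a (b * c) = D 0 a b * (1 ⊗ₜ[k] c) + (b ⊗ₜ[k] 1) * D 0 a c) ∧
    -- right Leibniz rule
    (∀ a b c : V,
      D 0 (a * b) c = D 0 a c * (b ⊗ₜ[k] 1) + (1 ⊗ₜ[k] a) * D 0 b c) ∧
    -- double Jacobi identity
    (∀ a b c : V, DL 0 a (D 0 b c) - DR 0 b (D 0 a c) - DT 0 c (D 0 a b) = 0) ∧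
    -- S-equivariance
    (∀ a b : V,
      (TensorProduct.congr S.toLinearEquiv S.toLinearEquiv) (D 0 a b)
        = D 0 (S a) (S b)) ∧
    -- locality
    (∀ a b : V, {n : ℤ | D 0 ((S ^ n : V ≃ₐ[k] V) a) b ≠ 0}.Finite) := by

  have key : ∀ (n m : ℤ) (a b : V), D m ((S ^ n : V ≃ₐ[k] V) a) b = D (m + n) a b := by
    intro n
    induction n using Int.induction_on with
    | zero => intro m a b; simp
    | succ i ih =>
        intro m a b
        have : (S ^ ((i : ℤ) + 1) : V ≃ₐ[k] V) a = S ((S ^ (i : ℤ) : V ≃ₐ[k] V) a) := by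
          rw [add_comm, zpow_add, zpow_one]; rfl
        rw [this, hses1, ih]; ring_nf
    | pred i ih =>
        intro m a b
        have h1 : (S ^ (-(i : ℤ)) : V ≃ₐ[k] V) a
            = S ((S ^ (-(i : ℤ) - 1) : V ≃ₐ[k] V) a) := by
          have : (S ^ (-(i : ℤ)) : V ≃ₐ[k] V) = S ^ (1 : ℤ) * S ^ (-(i : ℤ) - 1) := by
            rw [← zpow_add]; ring_nf
          rw [this, zpow_one]; rfl
        have := ih m a b
        rw [h1, hses1] at this
        have h2 := ih (m - 1) a b
        rw [h1, hses1] at h2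
        have h3 : m - 1 + 1 = m := by ring
        rw [h3] at h2
        rw [h2]; ring_nf
  refine ⟨?_, ?_, ?_, ?_, ?_, ?_⟩
  · intro a b
    have h := hskew 0 a b
    simpa [zpow_zero, show (1 : V ≃ₐ[k] V).toLinearEquiv = LinearEquiv.refl k V from rfl] using h
  · intro a b c; exact hleibL 0 a b c
  · intro a b c
    have h := hleibR 0 a b c
    simpa using h
  · intro a b c
    have h := hjac 0 0 a b c
    simpa using h
  · intro a b
    have h1 := hses1 (-1) a (S b)
    have h2 := hses2 0 (S a) b
    rw [show (-1 : ℤ) + 1 = 0 by ring] at h1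
    rw [show (0 : ℤ) - 1 = -1 by ring] at h2
    -- D 0 (S a) (S b) = congr S S (D (-1) (S a) b) and D (-1) (S a) b = ?
    have h3 := hses1 (-1) a b
    rw [show (-1 : ℤ) + 1 = 0 by ring] at h3
    rw [h2, h3]
  · intro a b
    apply Set.Finite.subset (hfin a b)
    intro n hn
    simp only [Set.mem_setOf_eq] at hn ⊢
    rwa [key n 0 a b, zero_add] at hn
end

section
/- Let 𝒱 be a local lattice double Poisson algebra with double Poisson bracket ⟨⟨−,−⟩⟩ and infinite-order automorphism S. Then ⟨⟨a_λ b⟩⟩ := Σ_{n∈ℤ} λⁿ ⟨⟨Sⁿ(a), b⟩⟩ is well-defined (valued in (𝒱⊗𝒱)[λ,λ⁻¹]) and endows 𝒱 with a double multiplicative Poisson vertex algebra structure; in particular the two sesquilinearity identities ⟨⟨S(a)_λ b⟩⟩ = λ⁻¹⟨⟨a_λ b⟩⟩ and ⟨⟨a_λ S(b)⟩⟩ = λS(⟨⟨a_λ b⟩⟩) hold. -/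
open TensorProduct

private lemma congr_comp7 {k V : Type*} [Field k] [AddCommGroup V] [Module k V]
    (f g : V ≃ₗ[k] V) (x : V ⊗[k] V) :
    TensorProduct.congr f f (TensorProduct.congr g g x)
      = TensorProduct.congr (g ≪≫ₗ f) (g ≪≫ₗ f) x := by
  induction x using TensorProduct.induction_on with
  | zero => simp
  | tmul a b => simp
  | add a b ha hb => simp [ha, hb]

private lemma comm_congr7 {k V : Type*} [Field k] [AddCommGroup V] [Module k V]
    (f : V ≃ₗ[k] V) (x : V ⊗[k] V) :
    TensorProduct.comm k V V (TensorProduct.congr f f x)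
      = TensorProduct.congr f f (TensorProduct.comm k V V x) := by
  induction x using TensorProduct.induction_on with
  | zero => simp
  | tmul a b => simp
  | add a b ha hb => simp [ha, hb]

/-- A local lattice double Poisson algebra `(V, ⟨⟨-,-⟩⟩, S)` gives rise to
a double multiplicative Poisson vertex algebra via
`⟨⟨a_λ b⟩⟩ := Σₙ λⁿ ⟨⟨Sⁿ(a), b⟩⟩`, encoded by its coefficients `db (Sⁿ a) b`:
these have finite support in `n` (well-definedness, i.e. the bracket is valued in
Laurent polynomials) and satisfy both sesquilinearity identities, both Leibniz
rules, skewsymmetry and the Jacobi identity. -/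
theorem stmt7 {k V : Type*} [Field k] [CharZero k] [Ring V] [Algebra k V]
    (S : V ≃ₐ[k] V)
    (hS : ∀ n : ℤ, n ≠ 0 → (S ^ n : V ≃ₐ[k] V) ≠ 1)
    (db : V →ₗ[k] V →ₗ[k] V ⊗[k] V)
    (hskew : ∀ a b : V, db a b = - (TensorProduct.comm k V V) (db b a))
    (hleibL : ∀ a b c : V,
      db a (b * c) = db a b * (1 ⊗ₜ[k] c) + (b ⊗ₜ[k] 1) * db a c)
    (hleibR : ∀ a b c : V,
      db (a * b) c = db a c * (b ⊗ₜ[k] 1) + (1 ⊗ₜ[k] a) * db b c)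
    (dbL dbR dbT : V → (V ⊗[k] V) →ₗ[k] V ⊗[k] (V ⊗[k] V))
    (hdbL : ∀ a x y : V,
      dbL a (x ⊗ₜ[k] y) = (TensorProduct.assoc k V V V) ((db a x) ⊗ₜ[k] y))
    (hdbR : ∀ a x y : V, dbR a (x ⊗ₜ[k] y) = x ⊗ₜ[k] (db a y))
    (hdbT : ∀ c x y : V,
      dbT c (x ⊗ₜ[k] y)
        = (TensorProduct.congr (LinearEquiv.refl k V) (TensorProduct.comm k V V))
            ((TensorProduct.assoc k V V V) ((db x c) ⊗ₜ[k] y)))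
    (hjac : ∀ a b c : V, dbL a (db b c) - dbR b (db a c) - dbT c (db a b) = 0)
    (hSeq : ∀ a b : V,
      (TensorProduct.congr S.toLinearEquiv S.toLinearEquiv) (db a b)
        = db (S a) (S b))
    (hloc : ∀ a b : V, {n : ℤ | db ((S ^ n : V ≃ₐ[k] V) a) b ≠ 0}.Finite) :
    -- well-definedness: finitely many nonzero coefficients
    (∀ a b : V, {n : ℤ | db ((S ^ n : V ≃ₐ[k] V) a) b ≠ 0}.Finite) ∧
    -- sesquilinearity in the first slot
    (∀ (n : ℤ) (a b : V),
      db ((S ^ n : V ≃ₐ[k] V) (S a)) b = db ((S ^ (n + 1) : V ≃ₐ[k] V) a) b) ∧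
    -- sesquilinearity in the second slot
    (∀ (n : ℤ) (a b : V),
      db ((S ^ n : V ≃ₐ[k] V) a) (S b)
        = (TensorProduct.congr S.toLinearEquiv S.toLinearEquiv)
            (db ((S ^ (n - 1) : V ≃ₐ[k] V) a) b)) ∧
    -- left Leibniz rule
    (∀ (n : ℤ) (a b c : V),
      db ((S ^ n : V ≃ₐ[k] V) a) (b * c)
        = db ((S ^ n : V ≃ₐ[k] V) a) b * (1 ⊗ₜ[k] c)
          + (b ⊗ₜ[k] 1) * db ((S ^ n : V ≃ₐ[k] V) a) c) ∧
    -- right Leibniz rule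
    (∀ (n : ℤ) (a b c : V),
      db ((S ^ n : V ≃ₐ[k] V) (a * b)) c
        = db ((S ^ n : V ≃ₐ[k] V) a) c * (((S ^ n : V ≃ₐ[k] V) b) ⊗ₜ[k] 1)
          + (1 ⊗ₜ[k] ((S ^ n : V ≃ₐ[k] V) a)) * db ((S ^ n : V ≃ₐ[k] V) b) c) ∧
    -- skewsymmetry
    (∀ (n : ℤ) (a b : V),
      db ((S ^ n : V ≃ₐ[k] V) a) b
        = - (TensorProduct.congr (S ^ n : V ≃ₐ[k] V).toLinearEquiv
              (S ^ n : V ≃ₐ[k] V).toLinearEquiv)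
            ((TensorProduct.comm k V V) (db ((S ^ (-n) : V ≃ₐ[k] V) b) a))) ∧
    -- Jacobi identity
    (∀ (m n : ℤ) (a b c : V),
      dbL ((S ^ m : V ≃ₐ[k] V) a) (db ((S ^ n : V ≃ₐ[k] V) b) c)
        - dbR ((S ^ n : V ≃ₐ[k] V) b) (db ((S ^ m : V ≃ₐ[k] V) a) c)
        - dbT c ((TensorProduct.congr (S ^ n : V ≃ₐ[k] V).toLinearEquiv
              (S ^ n : V ≃ₐ[k] V).toLinearEquiv)
            (db ((S ^ (m - n) : V ≃ₐ[k] V) a) b)) = 0) := by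
  
  -- basic zpow facts
  have pow_apply : ∀ (m n : ℤ) (v : V),
      (S ^ m : V ≃ₐ[k] V) ((S ^ n : V ≃ₐ[k] V) v) = (S ^ (m + n) : V ≃ₐ[k] V) v := by
    intro m n v
    rw [zpow_add]
    rfl
  have lin_succ : ∀ n : ℤ,
      ((S ^ n : V ≃ₐ[k] V).toLinearEquiv ≪≫ₗ S.toLinearEquiv)
        = (S ^ (n + 1) : V ≃ₐ[k] V).toLinearEquiv := by
    intro n
    apply LinearEquiv.toLinearMap_injective
    apply LinearMap.ext
    intro v
    have := pow_apply 1 n v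
    simpa [add_comm] using this
  have lin_pred : ∀ n : ℤ,
      ((S ^ n : V ≃ₐ[k] V).toLinearEquiv ≪≫ₗ S.symm.toLinearEquiv)
        = (S ^ (n - 1) : V ≃ₐ[k] V).toLinearEquiv := by
    intro n
    apply LinearEquiv.toLinearMap_injective
    apply LinearMap.ext
    intro v
    have h1 : (S ^ (-1 : ℤ) : V ≃ₐ[k] V) = S.symm := by
      simp [zpow_neg, zpow_one]
      rfl
    have := pow_apply (-1) n v
    rw [h1] at this
    simpa [sub_eq_add_neg, add_comm] using this
  -- inverse equivariance
  have hSeqInv : ∀ a b : V,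
      db (S.symm a) (S.symm b)
        = TensorProduct.congr S.symm.toLinearEquiv S.symm.toLinearEquiv (db a b) := by
    intro a b
    have h := hSeq (S.symm a) (S.symm b)
    simp only [AlgEquiv.apply_symm_apply] at h
    have h2 := congrArg
      (TensorProduct.congr S.symm.toLinearEquiv S.symm.toLinearEquiv) h
    rw [congr_comp7] at h2
    have hid : (S.toLinearEquiv ≪≫ₗ S.symm.toLinearEquiv) = LinearEquiv.refl k V := by
      apply LinearEquiv.toLinearMap_injective
      apply LinearMap.ext
      intro v
      simp [AlgEquiv.toLinearEquiv]
    rw [hid] at h2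
    simpa using h2
  -- iterated equivariance
  have key : ∀ (n : ℤ) (a b : V),
      db ((S ^ n : V ≃ₐ[k] V) a) ((S ^ n : V ≃ₐ[k] V) b)
        = TensorProduct.congr (S ^ n : V ≃ₐ[k] V).toLinearEquiv
            (S ^ n : V ≃ₐ[k] V).toLinearEquiv (db a b) := by
    intro n
    induction n using Int.induction_on with
    | zero =>
      intro a b
      have : (S ^ (0 : ℤ) : V ≃ₐ[k] V) = 1 := zpow_zero S
      rw [this]
      have hid : (1 : V ≃ₐ[k] V).toLinearEquiv = LinearEquiv.refl k V := by
        apply LinearEquiv.toLinearMap_injective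
        apply LinearMap.ext
        intro v
        rfl
      rw [hid]
      simp
    | succ n ih =>
      intro a b
      have h1 : ((S ^ ((n : ℤ) + 1) : V ≃ₐ[k] V)) a
          = S ((S ^ (n : ℤ) : V ≃ₐ[k] V) a) := by
        have := pow_apply 1 n a
        rw [add_comm] at this
        simpa using this.symm
      have h1b : ((S ^ ((n : ℤ) + 1) : V ≃ₐ[k] V)) b
          = S ((S ^ (n : ℤ) : V ≃ₐ[k] V) b) := by
        have := pow_apply 1 n b
        rw [add_comm] at this
        simpa using this.symm
      rw [h1, h1b, ← hSeq, ih a b, congr_comp7, lin_succ]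
    | pred n ih =>
      intro a b
      have h1 : ((S ^ (-(n : ℤ) - 1) : V ≃ₐ[k] V)) a
          = S.symm ((S ^ (-(n : ℤ)) : V ≃ₐ[k] V) a) := by
        have h0 : (S ^ (-1 : ℤ) : V ≃ₐ[k] V) = S.symm := by
          simp [zpow_neg, zpow_one]
          rfl
        have := pow_apply (-1) (-(n : ℤ)) a
        rw [h0] at this
        rw [this]
        ring_nf
      have h1b : ((S ^ (-(n : ℤ) - 1) : V ≃ₐ[k] V)) b
          = S.symm ((S ^ (-(n : ℤ)) : V ≃ₐ[k] V) b) := by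
        have h0 : (S ^ (-1 : ℤ) : V ≃ₐ[k] V) = S.symm := by
          simp [zpow_neg, zpow_one]
          rfl
        have := pow_apply (-1) (-(n : ℤ)) b
        rw [h0] at this
        rw [this]
        ring_nf
      rw [h1, h1b, hSeqInv, ih a b, congr_comp7, lin_pred]
  refine ⟨hloc, ?_, ?_, ?_, ?_, ?_, ?_⟩
  · -- sesquilinearity in first slot
    intro n a b
    rw [show (S ^ n : V ≃ₐ[k] V) (S a) = (S ^ (n + 1) : V ≃ₐ[k] V) a from by
      simpa using pow_apply n 1 a]
  · -- sesquilinearity in second slot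
    intro n a b
    have hb : S b = (S ^ (1 : ℤ) : V ≃ₐ[k] V) b := by simp
    have ha : (S ^ n : V ≃ₐ[k] V) a
        = (S ^ (1 : ℤ) : V ≃ₐ[k] V) ((S ^ (n - 1) : V ≃ₐ[k] V) a) := by
      rw [pow_apply]; ring_nf
    rw [hb, ha, key 1]
    have h1 : (S ^ (1 : ℤ) : V ≃ₐ[k] V) = S := zpow_one S
    rw [h1]
  · -- left Leibniz
    intro n a b c
    exact hleibL _ b c
  · -- right Leibniz
    intro n a b c
    have : (S ^ n : V ≃ₐ[k] V) (a * b)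
        = (S ^ n : V ≃ₐ[k] V) a * (S ^ n : V ≃ₐ[k] V) b := map_mul _ a b
    rw [this, hleibR]
  · -- skewsymmetry
    intro n a b
    have hb : b = (S ^ n : V ≃ₐ[k] V) ((S ^ (-n) : V ≃ₐ[k] V) b) := by
      rw [pow_apply]; simp
    calc db ((S ^ n : V ≃ₐ[k] V) a) b
        = - (TensorProduct.comm k V V) (db b ((S ^ n : V ≃ₐ[k] V) a)) := hskew _ _
      _ = - (TensorProduct.comm k V V)
            (db ((S ^ n : V ≃ₐ[k] V) ((S ^ (-n) : V ≃ₐ[k] V) b))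
              ((S ^ n : V ≃ₐ[k] V) a)) := by rw [← hb]
      _ = - (TensorProduct.comm k V V)
            (TensorProduct.congr (S ^ n : V ≃ₐ[k] V).toLinearEquiv
              (S ^ n : V ≃ₐ[k] V).toLinearEquiv
              (db ((S ^ (-n) : V ≃ₐ[k] V) b) a)) := by rw [key]
      _ = _ := by rw [comm_congr7]
  · -- Jacobi
    intro m n a b c
    have h3 : (TensorProduct.congr (S ^ n : V ≃ₐ[k] V).toLinearEquiv
          (S ^ n : V ≃ₐ[k] V).toLinearEquiv)
        (db ((S ^ (m - n) : V ≃ₐ[k] V) a) b)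
        = db ((S ^ m : V ≃ₐ[k] V) a) ((S ^ n : V ≃ₐ[k] V) b) := by
      rw [← key]
      congr 1
      rw [pow_apply]
      ring_nf
    rw [h3]
    exact hjac _ _ c
end

section
/- Let ⟨⟨−_λ−⟩⟩ be a skewsymmetric double multiplicative λ-bracket on a unital associative algebra 𝒱 with automorphism S (skewsymmetry: ⟨⟨a_λ b⟩⟩ = −(substituting x = S)⟨⟨b_{λ⁻¹x⁻¹} a⟩⟩^σ). Then for all a, b, c ∈ 𝒱, ⟨⟨⟨⟨b_μ a⟩⟩_{λμ} c⟩⟩_L = −⟨⟨⟨⟨a_λ b⟩⟩^σ_{λμ} c⟩⟩_L, where for A = A′⊗A″ ∈ (𝒱⊗𝒱)[λ^{±1}], ⟨⟨A_{λμ} c⟩⟩_L := ⟨⟨A′_{λμx} c⟩⟩ ⊗₁ (x = S)(A″). -/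
open TensorProduct

/-- Lemma "Trick": For a skewsymmetric double multiplicative λ-bracket
(encoded by its coefficients `D n a b`, with `DT` the "first-slot tensor" extension
`⟨⟨(x⊗y)_{λμ} c⟩⟩_L` taken coefficientwise), one has
`⟨⟨⟨⟨b_μ a⟩⟩_{λμ} c⟩⟩_L = - ⟨⟨⟨⟨a_λ b⟩⟩^σ_{λμ} c⟩⟩_L`, i.e. on the coefficient of
`λᵐμⁿ`: `DT m c (D (n-m) b a) = - DT n c ((D (m-n) a b)^σ)`. -/
theorem stmt9 {k V : Type*} [Field k] [CharZero k] [Ring V] [Algebra k V]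
    (S : V ≃ₐ[k] V)
    (D : ℤ → V →ₗ[k] V →ₗ[k] V ⊗[k] V)
    (hses1 : ∀ (n : ℤ) (a b : V), D n (S a) b = D (n + 1) a b)
    (hses2 : ∀ (n : ℤ) (a b : V),
      D n a (S b)
        = (TensorProduct.congr S.toLinearEquiv S.toLinearEquiv) (D (n - 1) a b))
    (hleibL : ∀ (n : ℤ) (a b c : V),
      D n a (b * c) = D n a b * (1 ⊗ₜ[k] c) + (b ⊗ₜ[k] 1) * D n a c)
    (hleibR : ∀ (n : ℤ) (a b c : V),
      D n (a * b) c
        = D n a c * (((S ^ n : V ≃ₐ[k] V) b) ⊗ₜ[k] 1)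
          + (1 ⊗ₜ[k] ((S ^ n : V ≃ₐ[k] V) a)) * D n b c)
    (hskew : ∀ (n : ℤ) (a b : V),
      D n a b
        = - (TensorProduct.congr (S ^ n : V ≃ₐ[k] V).toLinearEquiv
              (S ^ n : V ≃ₐ[k] V).toLinearEquiv)
            ((TensorProduct.comm k V V) (D (-n) b a)))
    (DT : ℤ → V → (V ⊗[k] V) →ₗ[k] V ⊗[k] (V ⊗[k] V))
    (hDT : ∀ (n : ℤ) (c x y : V),
      DT n c (x ⊗ₜ[k] y)
        = (TensorProduct.congr (LinearEquiv.refl k V) (TensorProduct.comm k V V))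
            ((TensorProduct.assoc k V V V)
              ((D n x c) ⊗ₜ[k] ((S ^ n : V ≃ₐ[k] V) y)))) :
    ∀ (m n : ℤ) (a b c : V),
      DT m c (D (n - m) b a)
        = - DT n c ((TensorProduct.comm k V V) (D (m - n) a b)) := by
  -- first-slot sesquilinearity for integer powers of S
  have hinv : ∀ (m : ℤ) (a b : V), D m (S.symm a) b = D (m - 1) a b := by
    intro m a b
    have := hses1 (m - 1) (S.symm a) b
    simp at this
    rw [this]
  have hpow : ∀ (j m : ℤ) (y c : V),
      D m ((S ^ j : V ≃ₐ[k] V) y) c = D (m + j) y c := by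
    intro j
    induction j using Int.induction_on with
    | zero => intro m y c; simp
    | succ i ih =>
        intro m y c
        have h1 : (S ^ ((i : ℤ) + 1) : V ≃ₐ[k] V) y = S ((S ^ (i : ℤ) : V ≃ₐ[k] V) y) := by
          rw [show (i:ℤ)+1 = 1+(i:ℤ) by ring, zpow_add, zpow_one]; rfl
        rw [h1, hses1, ih]
        ring_nf
    | pred i ih =>
        intro m y c
        have h1 : (S ^ (-(i : ℤ) - 1) : V ≃ₐ[k] V) y
            = S.symm ((S ^ (-(i : ℤ)) : V ≃ₐ[k] V) y) := by
          rw [show -(i:ℤ)-1 = -1 + -(i:ℤ) by ring, zpow_add, zpow_neg_one]; rfl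
        rw [h1, hinv, ih]
        ring_nf
  have hpowS : ∀ (i j : ℤ) (x : V),
      (S ^ i : V ≃ₐ[k] V) ((S ^ j : V ≃ₐ[k] V) x) = (S ^ (i + j) : V ≃ₐ[k] V) x := by
    intro i j x
    rw [zpow_add]; rfl
  intro m n a b c
  have key : ∀ w : V ⊗[k] V,
      DT m c ((TensorProduct.congr (S ^ (n - m) : V ≃ₐ[k] V).toLinearEquiv
          (S ^ (n - m) : V ≃ₐ[k] V).toLinearEquiv) w) = DT n c w := by
    intro w
    induction w using TensorProduct.induction_on with
    | zero => simp
    | tmul x y =>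
        simp only [TensorProduct.congr_tmul]
        rw [show ((S ^ (n - m) : V ≃ₐ[k] V).toLinearEquiv x) = (S ^ (n - m) : V ≃ₐ[k] V) x
              from rfl,
           show ((S ^ (n - m) : V ≃ₐ[k] V).toLinearEquiv y) = (S ^ (n - m) : V ≃ₐ[k] V) y
              from rfl,
           hDT, hDT, hpow, hpowS]
        ring_nf
    | add u v hu hv => rw [map_add, map_add, map_add, hu, hv]
  rw [hskew (n - m) b a]
  rw [map_neg]
  rw [show -(n - m) = m - n by ring]
  rw [key ((TensorProduct.comm k V V) (D (m - n) a b))]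
end

section
/- Let γ ∈ k and let R(z) = Σ_{n≥N} rₙ zⁿ ∈ k((z)) be a formal Laurent series (field k of characteristic 0). Then R satisfies the functional equation (R(z) + R(w))·R(zw) − R(z)·R(w) = γ in k((z,w)) if and only if either R(z) = β is a constant with β² = γ, or there exist k ≥ 1 and β ∈ k with β² = γ such that R(z) = β(1 + 2Σ_{n≥1} z^{nk}), i.e. R(z) is the expansion ι₊ of β(1+z^k)/(1−z^k). -/
/-- Auxiliary: the backward verification for the non-constant case. -/
lemma stmt12_aux {k : Type*} [Field k] (k₀ : ℕ) (β : k) (r : ℤ → k)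
    (hr : ∀ n : ℤ, r n = if n = 0 then β
         else if 0 < n ∧ (k₀ : ℤ) ∣ n then 2 * β else 0) (m n : ℤ) :
    r (m - n) * r n + r (n - m) * r m - r m * r n
      = if m = 0 ∧ n = 0 then β ^ 2 else 0 := by
  have hr0 : r 0 = β := by rw [hr]; simp
  have hP : ∀ x : ℤ, 0 < x ∧ (k₀ : ℤ) ∣ x → r x = 2 * β := by
    intro x hx
    rw [hr, if_neg (by omega), if_pos hx]
  have hN : ∀ x : ℤ, x ≠ 0 → ¬(0 < x ∧ (k₀ : ℤ) ∣ x) → r x = 0 := by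
    intro x hx hx'
    rw [hr, if_neg hx, if_neg hx']
  by_cases hm : m = 0
  · subst hm
    by_cases hn : n = 0
    · subst hn; simp [hr0]; ring
    · rw [if_neg (by tauto)]
      have e1 : (0 : ℤ) - n = -n := by ring
      have e2 : n - (0 : ℤ) = n := by ring
      rw [e1, e2, hr0]
      by_cases hp : 0 < n ∧ (k₀ : ℤ) ∣ n
      · rw [hN (-n) (by omega) (by intro hc; omega)]; ring
      · rw [hN n hn hp]; ring
  · by_cases hn : n = 0
    · subst hn
      rw [if_neg (by tauto)]
      have e1 : m - (0 : ℤ) = m := by ring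
      have e2 : (0 : ℤ) - m = -m := by ring
      rw [e1, e2, hr0]
      by_cases hp : 0 < m ∧ (k₀ : ℤ) ∣ m
      · rw [hN (-m) (by omega) (by intro hc; omega)]; ring
      · rw [hN m hm hp]; ring
    · rw [if_neg (by tauto)]
      by_cases hmn : m = n
      · subst hmn
        simp only [sub_self, hr0]
        by_cases hp : 0 < m ∧ (k₀ : ℤ) ∣ m
        · rw [hP m hp]; ring
        · rw [hN m hm hp]; ring
      · -- m ≠ n, both nonzero
        by_cases hpm : 0 < m ∧ (k₀ : ℤ) ∣ m
        · by_cases hpn : 0 < n ∧ (k₀ : ℤ) ∣ n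
          · rcases lt_or_gt_of_ne hmn with hlt | hlt
            · -- m < n
              rw [hN (m - n) (by omega) (by intro hc; omega),
                  hP (n - m) ⟨by omega, dvd_sub hpn.2 hpm.2⟩, hP m hpm, hP n hpn]
              ring
            · -- n < m
              rw [hP (m - n) ⟨by omega, dvd_sub hpm.2 hpn.2⟩,
                  hN (n - m) (by omega) (by intro hc; omega), hP m hpm, hP n hpn]
              ring
          · have hnm : r (n - m) = 0 := by
              apply hN (n - m) (by omega)
              intro hc
              exact hpn ⟨by omega, by have := dvd_add hc.2 hpm.2; simpa using this⟩
            rw [hN n hn hpn, hnm]; ring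
        · by_cases hpn : 0 < n ∧ (k₀ : ℤ) ∣ n
          · have hmn' : r (m - n) = 0 := by
              apply hN (m - n) (by omega)
              intro hc
              exact hpm ⟨by omega, by have := dvd_add hc.2 hpn.2; simpa using this⟩
            rw [hN m hm hpm, hmn']; ring
          · rw [hN m hm hpm, hN n hn hpn]; ring

/-- A formal Laurent series `R(z) = Σₙ rₙ zⁿ ∈ k((z))` (support bounded
below) satisfies `(R(z)+R(w))R(zw) - R(z)R(w) = γ` in `k((z,w))` (stated
coefficientwise: the coefficient of `zᵐwⁿ` is `r_{m-n}rₙ + r_{n-m}rₘ - rₘrₙ`)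
if and only if `R(z) = β` is constant with `β² = γ`, or
`R(z) = β(1 + 2Σ_{n≥1} z^{nk₀}) = ι₊(β(1+z^{k₀})/(1-z^{k₀}))` for some `k₀ ≥ 1`
and `β` with `β² = γ`. -/
theorem stmt12 {k : Type*} [Field k] [CharZero k] (γ : k) (r : ℤ → k)
    (hsupp : ∃ N : ℤ, ∀ n < N, r n = 0) :
    (∀ m n : ℤ, r (m - n) * r n + r (n - m) * r m - r m * r n
        = if m = 0 ∧ n = 0 then γ else 0) ↔
    ((∃ β : k, β ^ 2 = γ ∧ ∀ n : ℤ, r n = if n = 0 then β else 0) ∨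
     (∃ k₀ : ℕ, 1 ≤ k₀ ∧ ∃ β : k, β ^ 2 = γ ∧
       ∀ n : ℤ, r n = if n = 0 then β
         else if 0 < n ∧ (k₀ : ℤ) ∣ n then 2 * β else 0)) := by
  constructor
  · intro h
    have hγ : r 0 * r 0 = γ := by
      have h00 := h 0 0
      rw [if_pos (And.intro rfl rfl)] at h00
      simp only [sub_self] at h00
      linear_combination h00
    set β := r 0 with hβdef
    have hdich : ∀ n : ℤ, n ≠ 0 → r n = 0 ∨ r n = 2 * β := by
      intro n hn
      have hnn := h n n
      rw [if_neg (by tauto)] at hnn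
      simp only [sub_self] at hnn
      have hz : r n * (2 * β - r n) = 0 := by rw [hβdef]; linear_combination hnn
      rcases mul_eq_zero.mp hz with h1 | h1
      · exact Or.inl h1
      · exact Or.inr (by linear_combination -h1)
    have hnegmul : ∀ n : ℤ, n ≠ 0 → r (-n) * r n = 0 := by
      intro n hn
      have h0n := h 0 n
      rw [if_neg (by tauto)] at h0n
      simp only [zero_sub, sub_zero] at h0n
      linear_combination h0n
    by_cases hβ0 : β = 0
    · left
      refine ⟨β, by rw [sq, hβdef]; exact hγ, ?_⟩
      intro n
      by_cases hn : n = 0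
      · simp [hn, hβdef]
      · rw [if_neg hn]
        rcases hdich n hn with h1 | h1
        · exact h1
        · rw [h1, hβ0]; ring
    · by_cases htriv : ∀ n : ℤ, n ≠ 0 → r n = 0
      · left
        refine ⟨β, by rw [sq, hβdef]; exact hγ, ?_⟩
        intro n
        by_cases hn : n = 0
        · simp [hn, hβdef]
        · rw [if_neg hn]; exact htriv n hn
      · right
        push_neg at htriv
        obtain ⟨n₀, hn₀ne, hn₀⟩ := htriv
        have hrn₀ : r n₀ = 2 * β := by
          rcases hdich n₀ hn₀ne with h1 | h1
          · exact absurd h1 hn₀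
          · exact h1
        have two_beta_ne : (2 : k) * β ≠ 0 := by
          simp [hβ0]
        have hadd : ∀ a b : ℤ, a ≠ 0 → b ≠ 0 → r a = 2 * β → r b = 2 * β →
            a + b ≠ 0 ∧ r (a + b) = 2 * β := by
          intro a b ha hb hra hrb
          have hab : a + b ≠ 0 := by
            intro hz
            have hb' : b = -a := by omega
            have hm := hnegmul a ha
            rw [← hb', hrb, hra] at hm
            exact mul_ne_zero two_beta_ne two_beta_ne hm
          have heq := h (a + b) b
          rw [if_neg (fun hc => hb hc.2)] at heq
          have e1 : a + b - b = a := by ring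
          have e2 : b - (a + b) = -a := by ring
          rw [e1, e2, hra, hrb] at heq
          rcases hdich (a + b) hab with h1 | h1
          · rw [h1] at heq
            exfalso
            apply mul_ne_zero two_beta_ne two_beta_ne
            linear_combination heq
          · exact ⟨hab, h1⟩
        have hmul : ∀ a : ℤ, a ≠ 0 → r a = 2 * β → ∀ j : ℕ,
            ((j : ℤ) + 1) * a ≠ 0 ∧ r (((j : ℤ) + 1) * a) = 2 * β := by
          intro a ha hra j
          induction j with
          | zero => simpa using ⟨ha, hra⟩
          | succ i ih =>
            have hstep := hadd (((i : ℤ) + 1) * a) a ih.1 ha ih.2 hra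
            have e : ((i : ℤ) + 1) * a + a = (((i + 1 : ℕ) : ℤ) + 1) * a := by
              push_cast; ring
            rw [e] at hstep
            exact hstep
        have hpos : ∀ a : ℤ, a ≠ 0 → r a = 2 * β → 0 < a := by
          intro a ha hra
          by_contra hle
          push_neg at hle
          obtain ⟨N, hN⟩ := hsupp
          have hj : ∃ j : ℕ, (j : ℤ) = N.natAbs + 1 := ⟨N.natAbs + 1, by push_cast; ring⟩
          obtain ⟨j, hj⟩ := hj
          have hja := (hmul a ha hra j).2
          have ha1 : a ≤ -1 := by omega
          have hNj : -N ≤ (j : ℤ) := by omega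
          have hlt : ((j : ℤ) + 1) * a < N := by
            have hmm := mul_le_mul_of_nonneg_left ha1
              (show (0 : ℤ) ≤ (j : ℤ) + 1 by positivity)
            linarith
          rw [hN _ hlt] at hja
          exact two_beta_ne hja.symm
        have hsub : ∀ a b : ℤ, a ≠ 0 → b ≠ 0 → r a = 2 * β → r b = 2 * β → b < a →
            r (a - b) = 2 * β := by
          intro a b ha hb hra hrb hlt
          have hba : r (b - a) = 0 := by
            rcases hdich (b - a) (by omega) with h1 | h1
            · exact h1
            · exfalso; have := hpos _ (by omega) h1; omega
          have heq := h a b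
          rw [if_neg (fun hc => hb hc.2), hra, hrb, hba] at heq
          have hz : (r (a - b) - 2 * β) * (2 * β) = 0 := by linear_combination heq
          rcases mul_eq_zero.mp hz with h1 | h1
          · linear_combination h1
          · exact absurd h1 two_beta_ne
        classical
        have hn₀pos : 0 < n₀ := hpos n₀ hn₀ne hrn₀
        have hex : ∃ j : ℕ, 0 < j ∧ r (j : ℤ) = 2 * β :=
          ⟨n₀.toNat, by omega, by rw [Int.toNat_of_nonneg hn₀pos.le]; exact hrn₀⟩
        set k₀ := Nat.find hex with hk₀def
        obtain ⟨hk₀pos, hk₀r⟩ := Nat.find_spec hex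
        have hk₀ne : (k₀ : ℤ) ≠ 0 := by exact_mod_cast hk₀pos.ne'
        have hmult : ∀ n : ℤ, 0 < n → (k₀ : ℤ) ∣ n → r n = 2 * β := by
          rintro n hn ⟨c, hc⟩
          have hc1 : 1 ≤ c := by
            by_contra hcle
            push_neg at hcle
            have : (k₀ : ℤ) * c ≤ 0 := by
              apply mul_nonpos_of_nonneg_of_nonpos
              · positivity
              · omega
            omega
          obtain ⟨j, hjc⟩ : ∃ j : ℕ, c = (j : ℤ) + 1 := ⟨(c - 1).toNat, by omega⟩
          have := (hmul (k₀ : ℤ) hk₀ne hk₀r j).2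
          rw [hc, hjc]
          rw [show (k₀ : ℤ) * ((j : ℤ) + 1) = ((j : ℤ) + 1) * (k₀ : ℤ) by ring]
          exact this
        have hdvd : ∀ j : ℕ, 0 < j → r (j : ℤ) = 2 * β → k₀ ∣ j := by
          intro j
          induction j using Nat.strong_induction_on with
          | _ j ih =>
            intro hj hrj
            have hk₀le : k₀ ≤ j := Nat.find_min' hex ⟨hj, hrj⟩
            rcases eq_or_lt_of_le hk₀le with heq | hlt
            · exact heq ▸ dvd_refl _
            · have hs := hsub (j : ℤ) (k₀ : ℤ) (by exact_mod_cast hj.ne') hk₀ne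
                hrj hk₀r (by exact_mod_cast hlt)
              have hcast : ((j : ℤ) - (k₀ : ℤ)) = ((j - k₀ : ℕ) : ℤ) := by omega
              rw [hcast] at hs
              have hdk := ih (j - k₀) (by omega) (by omega) hs
              have : k₀ ∣ (j - k₀) + k₀ := hdk.add (dvd_refl _)
              rwa [Nat.sub_add_cancel hk₀le] at this
        refine ⟨k₀, hk₀pos, β, by rw [sq, hβdef]; exact hγ, ?_⟩
        intro n
        by_cases hn0 : n = 0
        · simp [hn0, hβdef]
        · rw [if_neg hn0]
          by_cases hc : 0 < n ∧ (k₀ : ℤ) ∣ n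
          · rw [if_pos hc]; exact hmult n hc.1 hc.2
          · rw [if_neg hc]
            rcases hdich n hn0 with h1 | h1
            · exact h1
            · exfalso
              apply hc
              have hp := hpos n hn0 h1
              refine ⟨hp, ?_⟩
              have hd := hdvd n.toNat (by omega)
                (by rw [Int.toNat_of_nonneg hp.le]; exact h1)
              have : (k₀ : ℤ) ∣ (n.toNat : ℤ) := Int.natCast_dvd_natCast.mpr hd
              rwa [Int.toNat_of_nonneg hp.le] at this
  · rintro (⟨β, hβ, hr⟩ | ⟨k₀, hk₀, β, hβ, hr⟩) <;> intro m n
    · rw [← hβ]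
      simp only [hr]
      split_ifs <;> first | ring1 | (exfalso; omega)
    · rw [← hβ]
      exact stmt12_aux k₀ β r hr m n
end

section
/- Let k be a field of characteristic 0, let β ∈ k, k₀ ≥ 1, and R(z) = β(1 + 2Σ_{n≥1} z^{n k₀}) ∈ k((z)). Then a Laurent series Q(z) ∈ k((z)) satisfies (R(z) + R(w))·Q(zw) + Q(z)·Q(w) = 0 in k((z,w)) if and only if Q(z) = α Σ_{n≥0} z^{n k₀ + p} for some p ∈ ℤ and α ∈ k with α(2β + α) = 0 (equivalently Q(z) is the expansion ι₊ of αz^p/(1 − z^{k₀}), including the trivial solution α = 0). -/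
/-- Let `R(z) = β(1 + 2Σ_{n≥1} z^{n k₀})` with `k₀ ≥ 1`. A formal
Laurent series `Q(z) = Σₙ qₙ zⁿ ∈ k((z))` (support bounded below) satisfies
`(R(z)+R(w))Q(zw) + Q(z)Q(w) = 0` in `k((z,w))` (stated coefficientwise: the
coefficient of `zᵐwⁿ` is `R_{m-n}qₙ + R_{n-m}qₘ + qₘqₙ`) if and only if
`Q(z) = α Σ_{n≥0} z^{n k₀ + p} = ι₊(α zᵖ/(1-z^{k₀}))` for some `p ∈ ℤ` and
`α ∈ k` with `α(2β + α) = 0` (including the trivial solution `α = 0`). -/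
theorem stmt13 {k : Type*} [Field k] [CharZero k] (β : k) (k₀ : ℕ) (hk₀ : 1 ≤ k₀)
    (q : ℤ → k) (hsupp : ∃ M : ℤ, ∀ n < M, q n = 0) :
    (∀ m n : ℤ,
        (if m - n = 0 then β
          else if 0 < m - n ∧ (k₀ : ℤ) ∣ (m - n) then 2 * β else 0) * q n
        + (if n - m = 0 then β
            else if 0 < n - m ∧ (k₀ : ℤ) ∣ (n - m) then 2 * β else 0) * q m
        + q m * q n = 0) ↔
    (∃ (p : ℤ) (α : k), α * (2 * β + α) = 0 ∧
      ∀ n : ℤ, q n = if p ≤ n ∧ (k₀ : ℤ) ∣ (n - p) then α else 0) := by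
  constructor
  · intro h
    by_cases hq0 : ∀ n, q n = 0
    · exact ⟨0, 0, by ring, fun n => by simp [hq0]⟩
    · push_neg at hq0
      obtain ⟨M, hM⟩ := hsupp
      obtain ⟨p, hp, hmin⟩ := Int.exists_least_of_bdd (P := fun n => q n ≠ 0)
        ⟨M, fun z hz => not_lt.1 fun hlt => hz (hM z hlt)⟩ hq0
      have hself : ∀ n, q n * (2 * β + q n) = 0 := by
        intro n
        have hn := h n n
        simp only [sub_self, ↓reduceIte] at hn
        linear_combination hn
      have hqp : q p = -(2 * β) := by
        rcases mul_eq_zero.1 (hself p) with h1 | h1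
        · exact absurd h1 hp
        · linear_combination h1
      refine ⟨p, q p, by rw [hqp]; ring, fun n => ?_⟩
      rcases lt_trichotomy n p with hnp | hnp | hnp
      · rw [if_neg (fun hc => absurd hc.1 (by omega))]
        by_contra hne
        exact absurd (hmin n hne) (by omega)
      · subst hnp
        rw [if_pos ⟨le_refl _, by simp⟩]
      · have hnpe := h n p
        rw [if_neg (show ¬(n - p = 0) by omega),
            if_neg (show ¬(p - n = 0) by omega),
            if_neg (show ¬(0 < p - n ∧ (k₀ : ℤ) ∣ (p - n)) from
              fun hc => absurd hc.1 (by omega))] at hnpe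
        by_cases hd : (k₀ : ℤ) ∣ (n - p)
        · rw [if_pos (show 0 < n - p ∧ (k₀ : ℤ) ∣ (n - p) from ⟨by omega, hd⟩)] at hnpe
          rw [if_pos ⟨le_of_lt hnp, hd⟩]
          have hβ : β ≠ 0 := fun hb => hp (by rw [hqp, hb]; ring)
          have h2 : 2 * β * (q n + 2 * β) = 0 := by
            rw [hqp] at hnpe
            linear_combination -hnpe
          rcases mul_eq_zero.1 h2 with h3 | h3
          · exact absurd h3 (by simpa using hβ)
          · linear_combination h3 - hqp
        · rw [if_neg (fun hc => hd hc.2)] at hnpe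
          rw [if_neg (fun hc => hd hc.2)]
          rcases mul_eq_zero.1 (show q n * q p = 0 by linear_combination hnpe) with h1 | h1
          · exact h1
          · exact absurd h1 hp
  · rintro ⟨p, α, hα, hq⟩ m n
    rcases mul_eq_zero.1 hα with h0 | h0
    · subst h0
      simp only [hq, ite_self]
      ring
    · have hα2 : α = -(2 * β) := by linear_combination h0
      rw [hq m, hq n]
      rcases lt_trichotomy m n with hmn | hmn | hmn
      · rw [if_neg (show ¬(m - n = 0) by omega),
            if_neg (show ¬(n - m = 0) by omega),
            if_neg (show ¬(0 < m - n ∧ (k₀ : ℤ) ∣ (m - n)) from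
              fun hc => absurd hc.1 (by omega))]
        by_cases hIm : p ≤ m ∧ (k₀ : ℤ) ∣ (m - p)
        · rw [if_pos hIm]
          by_cases hd : (k₀ : ℤ) ∣ (n - m)
          · have hIn : p ≤ n ∧ (k₀ : ℤ) ∣ (n - p) :=
              ⟨by omega, by have := dvd_add hd hIm.2; rwa [show n - m + (m - p) = n - p by ring] at this⟩
            rw [if_pos (show 0 < n - m ∧ (k₀ : ℤ) ∣ (n - m) from ⟨by omega, hd⟩),
                if_pos hIn, hα2]
            ring
          · rw [if_neg (show ¬(0 < n - m ∧ (k₀ : ℤ) ∣ (n - m)) from fun hc => hd hc.2),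
                if_neg (show ¬(p ≤ n ∧ (k₀ : ℤ) ∣ (n - p)) from fun hc => hd
                  (by have := dvd_sub hc.2 hIm.2;
                      rwa [show n - p - (m - p) = n - m by ring] at this))]
            ring
        · rw [if_neg hIm]
          ring
      · subst hmn
        simp only [sub_self, ↓reduceIte]
        by_cases hIm : p ≤ m ∧ (k₀ : ℤ) ∣ (m - p)
        · rw [if_pos hIm, hα2]; ring
        · rw [if_neg hIm]; ring
      · rw [if_neg (show ¬(n - m = 0) by omega),
            if_neg (show ¬(m - n = 0) by omega),
            if_neg (show ¬(0 < n - m ∧ (k₀ : ℤ) ∣ (n - m)) from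
              fun hc => absurd hc.1 (by omega))]
        by_cases hIn : p ≤ n ∧ (k₀ : ℤ) ∣ (n - p)
        · rw [if_pos hIn]
          by_cases hd : (k₀ : ℤ) ∣ (m - n)
          · have hIm : p ≤ m ∧ (k₀ : ℤ) ∣ (m - p) :=
              ⟨by omega, by have := dvd_add hd hIn.2; rwa [show m - n + (n - p) = m - p by ring] at this⟩
            rw [if_pos (show 0 < m - n ∧ (k₀ : ℤ) ∣ (m - n) from ⟨by omega, hd⟩),
                if_pos hIm, hα2]
            ring
          · rw [if_neg (show ¬(0 < m - n ∧ (k₀ : ℤ) ∣ (m - n)) from fun hc => hd hc.2),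
                if_neg (show ¬(p ≤ m ∧ (k₀ : ℤ) ∣ (m - p)) from fun hc => hd
                  (by have := dvd_sub hc.2 hIn.2;
                      rwa [show m - p - (n - p) = m - n by ring] at this))]
            ring
        · rw [if_neg hIn]
          ring
end

section
/- Let ℛ = k⟨uᵢ : i ∈ ℤ⟩ be the free associative algebra of non-commutative difference polynomials in one variable u = u₀, with automorphism S(uᵢ) = u_{i+1}, and let ⟨⟨u_λ u⟩⟩ = Σ_{k∈ℤ} f_k λᵏ define a double multiplicative λ-bracket via the Master Formula. If this bracket is skewsymmetric (equivalently f_k = −Sᵏ(f_{−k}^σ) for all k) and satisfies the Jacobi identity, then for every k ≥ 0 the coefficient f_k ∈ ℛ⊗ℛ depends only on the variables u, u₁, …, u_k (i.e., ∂f_k/∂u_{i,·} vanishes for indices outside {0,…,k}). -/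
open TensorProduct

namespace Stmt14Aux

/-- Abbreviation for the free algebra `k⟨uᵢ : i ∈ ℤ⟩`. -/
abbrev RR (k : Type*) [Field k] : Type _ := FreeAlgebra k ℤ

variable {k : Type*} [Field k]

lemma lin_map_finsum {α M N : Type*} [AddCommMonoid M] [Module k M] [AddCommMonoid N]
    [Module k N] (g : M →ₗ[k] N) (f : α → M) (hf : (Function.support f).Finite) :
    g (∑ᶠ i, f i) = ∑ᶠ i, g (f i) :=
  g.toAddMonoidHom.map_finsum hf





/-- The "sandwich" map `p ⊗ q ↦ (p ⊗ 1) * w * (1 ⊗ q)`. -/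
noncomputable def Mid (w : RR k ⊗[k] RR k) : RR k ⊗[k] RR k →ₗ[k] RR k ⊗[k] RR k :=
  TensorProduct.lift <| LinearMap.mk₂ k
    (fun p q => (p ⊗ₜ[k] (1:RR k)) * w * ((1:RR k) ⊗ₜ[k] q))
    (by intro p p' q;  rw [TensorProduct.add_tmul, add_mul, add_mul])
    (by intro c p q;  rw [← TensorProduct.smul_tmul', smul_mul_assoc, smul_mul_assoc])
    (by intro p q q';  rw [TensorProduct.tmul_add, mul_add])
    (by intro c p q;  rw [TensorProduct.tmul_smul, mul_smul_comm])

@[simp] lemma Mid_tmul (w : RR k ⊗[k] RR k) (p q : RR k) :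
    Mid w (p ⊗ₜ[k] q) = (p ⊗ₜ[k] (1:RR k)) * w * ((1:RR k) ⊗ₜ[k] q) := rfl

@[simp] lemma Mid_zero : Mid (0 : RR k ⊗[k] RR k) = 0 := by
  apply TensorProduct.ext'
  intro p q
  simp

lemma Mid_add (w w' z : RR k ⊗[k] RR k) : Mid (w + w') z = Mid w z + Mid w' z := by
  induction z with
  | zero => simp
  | tmul p q => simp [mul_add, add_mul]
  | add z z' hz hz' => rw [map_add, map_add, map_add, hz, hz']; abel

/-- Identify `𝓡 ⊗ 𝓡` with `𝓡 ⊗ 𝓡ᵐᵒᵖ` linearly. -/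
noncomputable def ψ : RR k ⊗[k] RR k ≃ₗ[k] RR k ⊗[k] (RR k)ᵐᵒᵖ :=
  TensorProduct.congr (LinearEquiv.refl k (RR k)) (MulOpposite.opLinearEquiv k)

@[simp] lemma ψ_tmul (p q : RR k) : ψ (p ⊗ₜ[k] q) = p ⊗ₜ[k] (MulOpposite.op q) := rfl

lemma ψ_Mid (w z : RR k ⊗[k] RR k) : ψ (Mid w z) = ψ z * ψ w := by
  induction z with
  | zero => simp
  | tmul p q =>
    induction w with
    | zero => simp
    | tmul w1 w2 =>
      simp only [Mid_tmul, Algebra.TensorProduct.tmul_mul_tmul, one_mul, mul_one, ψ_tmul]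
      rw [← MulOpposite.op_mul]
    | add w w' hw hw' =>
      rw [Mid_add, map_add, map_add, mul_add, hw, hw']
  | add z z' hz hz' =>
    simp only [map_add, add_mul, hz, hz']



noncomputable def Φf : MonoidAlgebra k (FreeMonoid ℤ) →ₐ[k]
    MonoidAlgebra ((RR k)ᵐᵒᵖ) (FreeMonoid ℤ) :=
  (MonoidAlgebra.lift k _ (FreeMonoid ℤ)) (MonoidAlgebra.of ((RR k)ᵐᵒᵖ) (FreeMonoid ℤ))

noncomputable def Φg : (RR k)ᵐᵒᵖ →ₐ[k] MonoidAlgebra ((RR k)ᵐᵒᵖ) (FreeMonoid ℤ) :=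
  MonoidAlgebra.singleOneAlgHom

lemma Φcomm (x : MonoidAlgebra k (FreeMonoid ℤ)) (y : (RR k)ᵐᵒᵖ) :
    Commute (Φf x) (Φg y) := by
  induction x using MonoidAlgebra.induction_linear with
  | zero => simp only [map_zero]; exact Commute.zero_left _
  | add a b ha hb => simpa using Commute.add_left ha hb
  | single m c =>
    have : (Φf (k := k)) (MonoidAlgebra.single m c)
        = c • (MonoidAlgebra.single m 1 : MonoidAlgebra ((RR k)ᵐᵒᵖ) (FreeMonoid ℤ)) := by
      simp [Φf, MonoidAlgebra.lift_single, MonoidAlgebra.of_apply]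
    rw [this]
    apply Commute.smul_left
    show _ * _ = _ * _
    rw [show (Φg (k := k) y) = MonoidAlgebra.single 1 y from rfl]
    rw [MonoidAlgebra.single_mul_single, MonoidAlgebra.single_mul_single]
    simp

noncomputable def Φ : (MonoidAlgebra k (FreeMonoid ℤ)) ⊗[k] (RR k)ᵐᵒᵖ →ₐ[k]
    MonoidAlgebra ((RR k)ᵐᵒᵖ) (FreeMonoid ℤ) :=
  Algebra.TensorProduct.lift Φf Φg Φcomm

noncomputable def Ψinv : MonoidAlgebra ((RR k)ᵐᵒᵖ) (FreeMonoid ℤ) →ₗ[k]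
    (MonoidAlgebra k (FreeMonoid ℤ)) ⊗[k] (RR k)ᵐᵒᵖ :=
  (Finsupp.lsum k fun m => TensorProduct.mk k _ _ (MonoidAlgebra.single m (1:k))) ∘ₗ
    (MonoidAlgebra.coeffLinearEquiv k).toLinearMap

lemma Φ_leftinv (z : (MonoidAlgebra k (FreeMonoid ℤ)) ⊗[k] (RR k)ᵐᵒᵖ) :
    Ψinv (Φ (k := k) z) = z := by
  induction z with
  | zero => simp
  | add a b ha hb => rw [map_add, map_add, ha, hb]
  | tmul x a =>
    induction x using MonoidAlgebra.induction_linear with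
    | zero => rw [TensorProduct.zero_tmul]; simp
    | add p q hp hq =>
      rw [TensorProduct.add_tmul, map_add, map_add, hp, hq]
    | single m c =>
      rw [Φ, Algebra.TensorProduct.lift_tmul]
      have h1 : (Φf (k := k)) (MonoidAlgebra.single m c)
          = c • (MonoidAlgebra.single m 1 : MonoidAlgebra ((RR k)ᵐᵒᵖ) (FreeMonoid ℤ)) := by
        simp [Φf, MonoidAlgebra.lift_single, MonoidAlgebra.of_apply]
      rw [h1, show (Φg (k := k) a) = MonoidAlgebra.single 1 a from rfl,
        smul_mul_assoc, MonoidAlgebra.single_mul_single, map_smul]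
      rw [show (Ψinv (k := k)) (MonoidAlgebra.single (m * 1) ((1 : (RR k)ᵐᵒᵖ) * a))
          = (MonoidAlgebra.single (m*1) 1 : MonoidAlgebra k (FreeMonoid ℤ)) ⊗ₜ[k] ((1 : (RR k)ᵐᵒᵖ) * a) from
        Finsupp.sum_single_index (by simp)]
      rw [one_mul, mul_one]
      rw [TensorProduct.smul_tmul', MonoidAlgebra.smul_single', mul_one]

lemma Φ_inj : Function.Injective (Φ (k := k)) :=
  Function.LeftInverse.injective Φ_leftinv

lemma nzd : NoZeroDivisors (RR k ⊗[k] (RR k)ᵐᵒᵖ) := by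
  letI : NoZeroDivisors (MonoidAlgebra ((RR k)ᵐᵒᵖ) (FreeMonoid ℤ)) := inferInstance
  have Ξ := Algebra.TensorProduct.congr
    (FreeAlgebra.equivMonoidAlgebraFreeMonoid (R := k) (X := ℤ))
    (AlgEquiv.refl (R := k) (A₁ := (RR k)ᵐᵒᵖ))
  exact Function.Injective.noZeroDivisors (fun z => Φ (k := k) (Ξ z))
    (Φ_inj.comp Ξ.injective) (by simp) (by intro x y; simp [map_mul])



section withS
variable (S : FreeAlgebra k ℤ ≃ₐ[k] FreeAlgebra k ℤ)

/-- `S^s ⊗ S^s` as a linear equivalence of `𝓡 ⊗ 𝓡`. -/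
noncomputable def E (s : ℤ) : RR k ⊗[k] RR k ≃ₗ[k] RR k ⊗[k] RR k :=
  TensorProduct.congr (S ^ s).toLinearEquiv (S ^ s).toLinearEquiv

@[simp] lemma E_tmul (s : ℤ) (x y : RR k) :
    E S s (x ⊗ₜ[k] y) = ((S ^ s) x) ⊗ₜ[k] ((S ^ s) y) := rfl

@[simp] lemma congr1_tmul (x y : RR k) :
    (TensorProduct.congr S.toLinearEquiv S.toLinearEquiv) (x ⊗ₜ[k] y)
      = (S x) ⊗ₜ[k] (S y) := rfl

lemma Sinv_eq_symm : (S⁻¹ : FreeAlgebra k ℤ ≃ₐ[k] FreeAlgebra k ℤ) = S.symm := rfl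

lemma E_zero_apply (z : RR k ⊗[k] RR k) : E S 0 z = z := by
  induction z with
  | zero => simp
  | tmul x y => rw [E_tmul]; norm_num
  | add a b ha hb => rw [map_add, ha, hb]

lemma congr1_then_E (s : ℤ) (z : RR k ⊗[k] RR k) :
    E S s ((TensorProduct.congr S.toLinearEquiv S.toLinearEquiv) z) = E S (s + 1) z := by
  induction z with
  | zero => simp
  | tmul x y =>
    rw [congr1_tmul, E_tmul, E_tmul, zpow_add_one, AlgEquiv.mul_apply, AlgEquiv.mul_apply]
  | add a b ha hb => simp only [map_add, ha, hb]

lemma congr1symm_then_E (s : ℤ) (z : RR k ⊗[k] RR k) :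
    E S s ((TensorProduct.congr S.toLinearEquiv S.toLinearEquiv).symm z) = E S (s - 1) z := by
  induction z with
  | zero => simp
  | tmul x y =>
    rw [TensorProduct.congr_symm_tmul, E_tmul, E_tmul]
    rw [zpow_sub_one, AlgEquiv.mul_apply, AlgEquiv.mul_apply, Sinv_eq_symm]
    rfl
  | add a b ha hb => simp only [map_add, ha, hb]

lemma congr1_mul (a b : RR k ⊗[k] RR k) :
    (TensorProduct.congr S.toLinearEquiv S.toLinearEquiv) (a * b)
      = (TensorProduct.congr S.toLinearEquiv S.toLinearEquiv) a
        * (TensorProduct.congr S.toLinearEquiv S.toLinearEquiv) b := by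
  induction a with
  | zero => simp
  | tmul x y =>
    induction b with
    | zero => simp
    | tmul x' y' =>
      rw [Algebra.TensorProduct.tmul_mul_tmul, congr1_tmul, congr1_tmul, congr1_tmul,
        Algebra.TensorProduct.tmul_mul_tmul, map_mul, map_mul]
    | add a' b' ha hb => simp only [mul_add, map_add, ha, hb]
  | add a' b' ha hb => simp only [add_mul, map_add, ha, hb]

lemma S_zpow_ι (hSι : ∀ i : ℤ, S (FreeAlgebra.ι k i) = FreeAlgebra.ι k (i + 1)) (s : ℤ) :
    ∀ j : ℤ, (S ^ s) (FreeAlgebra.ι k j) = FreeAlgebra.ι k (j + s) := by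
  have hsymm : ∀ j : ℤ, S.symm (FreeAlgebra.ι k j) = FreeAlgebra.ι k (j - 1) := by
    intro j
    rw [AlgEquiv.symm_apply_eq, hSι]
    congr 1
    omega
  induction s using Int.induction_on with
  | zero => intro j; simp
  | succ i ih =>
    intro j
    rw [zpow_add_one, AlgEquiv.mul_apply, hSι, ih (j + 1)]
    congr 1
    omega
  | pred i ih =>
    intro j
    have : (-(i:ℤ) - 1) = (-(i:ℤ)) - 1 := by ring
    rw [this, zpow_sub_one, AlgEquiv.mul_apply, Sinv_eq_symm, hsymm, ih (j - 1)]
    congr 1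
    omega

end withS

section withd
variable (d : ℤ → (FreeAlgebra k ℤ →ₗ[k] FreeAlgebra k ℤ ⊗[k] FreeAlgebra k ℤ))

lemma d_one (hdmul : ∀ (n : ℤ) (a b : FreeAlgebra k ℤ),
      d n (a * b) = (a ⊗ₜ[k] 1) * d n b + d n a * (1 ⊗ₜ[k] b)) (n : ℤ) :
    d n (1 : RR k) = 0 := by
  have h := hdmul n 1 1
  rw [one_mul, ← Algebra.TensorProduct.one_def, one_mul, mul_one] at h
  exact add_eq_left.mp h.symm

lemma d_algebraMap (hdmul : ∀ (n : ℤ) (a b : FreeAlgebra k ℤ),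
      d n (a * b) = (a ⊗ₜ[k] 1) * d n b + d n a * (1 ⊗ₜ[k] b)) (n : ℤ) (r : k) :
    d n (algebraMap k (RR k) r) = 0 := by
  rw [Algebra.algebraMap_eq_smul_one, map_smul, d_one d hdmul, smul_zero]

lemma dFin (hdmul : ∀ (n : ℤ) (a b : FreeAlgebra k ℤ),
      d n (a * b) = (a ⊗ₜ[k] 1) * d n b + d n a * (1 ⊗ₜ[k] b))
    (hdι : ∀ n i : ℤ, d n (FreeAlgebra.ι k i)
      = if i = n then (1 : FreeAlgebra k ℤ) ⊗ₜ[k] (1 : FreeAlgebra k ℤ) else 0)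
    (x : RR k) : (Function.support fun i => d i x).Finite := by
  induction x using FreeAlgebra.induction with
  | grade0 r =>
    apply Set.Finite.subset (Set.finite_empty)
    intro i hi
    exact absurd (d_algebraMap d hdmul i r) hi
  | grade1 j =>
    apply Set.Finite.subset (Set.finite_singleton j)
    intro i hi
    by_contra hij
    apply hi
    show d i (FreeAlgebra.ι k j) = 0
    rw [hdι i j, if_neg (fun h => hij (by simp [h]))]
  | mul a b ha hb =>
    apply Set.Finite.subset (ha.union hb)
    intro i hi
    by_contra hab
    simp only [Set.mem_union, Function.mem_support, not_or, not_not] at hab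
    apply hi
    show d i (a * b) = 0
    rw [hdmul i a b, hab.1, hab.2, mul_zero, zero_mul, add_zero]
  | add a b ha hb =>
    apply Set.Finite.subset (ha.union hb)
    intro i hi
    by_contra hab
    simp only [Set.mem_union, Function.mem_support, not_or, not_not] at hab
    apply hi
    show d i (a + b) = 0
    rw [map_add, hab.1, hab.2, add_zero]

variable (S : FreeAlgebra k ℤ ≃ₐ[k] FreeAlgebra k ℤ)

lemma dS (hSι : ∀ i : ℤ, S (FreeAlgebra.ι k i) = FreeAlgebra.ι k (i + 1))
    (hdι : ∀ n i : ℤ, d n (FreeAlgebra.ι k i)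
      = if i = n then (1 : FreeAlgebra k ℤ) ⊗ₜ[k] (1 : FreeAlgebra k ℤ) else 0)
    (hdmul : ∀ (n : ℤ) (a b : FreeAlgebra k ℤ),
      d n (a * b) = (a ⊗ₜ[k] 1) * d n b + d n a * (1 ⊗ₜ[k] b))
    (i : ℤ) (x : RR k) :
    d i (S x) = (TensorProduct.congr S.toLinearEquiv S.toLinearEquiv) (d (i-1) x) := by
  induction x using FreeAlgebra.induction with
  | grade0 r =>
    rw [AlgEquiv.commutes, d_algebraMap d hdmul, d_algebraMap d hdmul, map_zero]
  | grade1 j =>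
    rw [hSι, hdι, hdι]
    by_cases hj : j = i - 1
    · rw [if_pos hj, if_pos (by omega), congr1_tmul, map_one]
    · rw [if_neg hj, if_neg (by omega), map_zero]
  | mul a b ha hb =>
    rw [map_mul, hdmul i (S a) (S b), ha, hb, hdmul (i-1) a b, map_add,
      congr1_mul, congr1_mul, congr1_tmul, congr1_tmul, map_one]
  | add a b ha hb =>
    rw [map_add, map_add, ha, hb, map_add, map_add]

lemma dSsymm (hSι : ∀ i : ℤ, S (FreeAlgebra.ι k i) = FreeAlgebra.ι k (i + 1))
    (hdι : ∀ n i : ℤ, d n (FreeAlgebra.ι k i)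
      = if i = n then (1 : FreeAlgebra k ℤ) ⊗ₜ[k] (1 : FreeAlgebra k ℤ) else 0)
    (hdmul : ∀ (n : ℤ) (a b : FreeAlgebra k ℤ),
      d n (a * b) = (a ⊗ₜ[k] 1) * d n b + d n a * (1 ⊗ₜ[k] b))
    (i : ℤ) (x : RR k) :
    d i (S.symm x)
      = (TensorProduct.congr S.toLinearEquiv S.toLinearEquiv).symm (d (i+1) x) := by
  have h := dS d S hSι hdι hdmul (i+1) (S.symm x)
  rw [AlgEquiv.apply_symm_apply, add_sub_cancel_right] at h
  rw [LinearEquiv.eq_symm_apply, ← h]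

lemma dS' (hSι : ∀ i : ℤ, S (FreeAlgebra.ι k i) = FreeAlgebra.ι k (i + 1))
    (hdι : ∀ n i : ℤ, d n (FreeAlgebra.ι k i)
      = if i = n then (1 : FreeAlgebra k ℤ) ⊗ₜ[k] (1 : FreeAlgebra k ℤ) else 0)
    (hdmul : ∀ (n : ℤ) (a b : FreeAlgebra k ℤ),
      d n (a * b) = (a ⊗ₜ[k] 1) * d n b + d n a * (1 ⊗ₜ[k] b))
    (s : ℤ) : ∀ (i : ℤ) (x : RR k), d i ((S ^ s) x) = E S s (d (i - s) x) := by
  induction s using Int.induction_on with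
  | zero =>
    intro i x
    rw [zpow_zero, AlgEquiv.one_apply, E_zero_apply, sub_zero]
  | succ s ih =>
    intro i x
    rw [zpow_add_one, AlgEquiv.mul_apply, ih i (S x), dS d S hSι hdι hdmul,
      congr1_then_E, show i - (s:ℤ) - 1 = i - ((s:ℤ) + 1) by omega]
  | pred s ih =>
    intro i x
    have harith : (-(s:ℤ) - 1) = (-(s:ℤ)) - 1 := by ring
    rw [harith, zpow_sub_one, AlgEquiv.mul_apply, Sinv_eq_symm,
      ih i (S.symm x), dSsymm d S hSι hdι hdmul, congr1symm_then_E,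
      show i - (-(s:ℤ)) + 1 = i - (-(s:ℤ) - 1) by omega]

end withd

section withD
variable (S : FreeAlgebra k ℤ ≃ₐ[k] FreeAlgebra k ℤ)
variable (D : ℤ → FreeAlgebra k ℤ →ₗ[k] FreeAlgebra k ℤ →ₗ[k]
      FreeAlgebra k ℤ ⊗[k] FreeAlgebra k ℤ)
variable (hses2 : ∀ (n : ℤ) (a b : FreeAlgebra k ℤ),
      D n a (S b)
        = (TensorProduct.congr S.toLinearEquiv S.toLinearEquiv) (D (n - 1) a b))

include hses2 in
lemma Dses2symm (n : ℤ) (a b : FreeAlgebra k ℤ) :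
    D n a (S.symm b)
      = (TensorProduct.congr S.toLinearEquiv S.toLinearEquiv).symm (D (n+1) a b) := by
  have h := hses2 (n+1) a (S.symm b)
  rw [AlgEquiv.apply_symm_apply, add_sub_cancel_right] at h
  rw [LinearEquiv.eq_symm_apply, ← h]

include hses2 in
lemma Dses2' (s : ℤ) : ∀ (n : ℤ) (a b : FreeAlgebra k ℤ),
    D n a ((S ^ s) b) = E S s (D (n - s) a b) := by
  induction s using Int.induction_on with
  | zero =>
    intro n a b
    rw [zpow_zero, AlgEquiv.one_apply, E_zero_apply, sub_zero]
  | succ s ih =>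
    intro n a b
    rw [zpow_add_one, AlgEquiv.mul_apply, ih n a (S b), hses2, congr1_then_E,
      show n - (s:ℤ) - 1 = n - ((s:ℤ) + 1) by omega]
  | pred s ih =>
    intro n a b
    have harith : (-(s:ℤ) - 1) = (-(s:ℤ)) - 1 := by ring
    rw [harith, zpow_sub_one, AlgEquiv.mul_apply, Sinv_eq_symm,
      ih n a (S.symm b), Dses2symm S D hses2, congr1symm_then_E,
      show n - (-(s:ℤ)) + 1 = n - (-(s:ℤ) - 1) by omega]

end withD

lemma Mid_injective {w : RR k ⊗[k] RR k} (hw : w ≠ 0) : Function.Injective (Mid w) := by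
  haveI := nzd (k := k)
  intro a b hab
  have h : Mid w (a - b) = 0 := by rw [map_sub, hab, sub_self]
  have h2 : ψ (a - b) * ψ w = 0 := by rw [← ψ_Mid, h, map_zero]
  rcases mul_eq_zero.mp h2 with h3 | h3
  · have h4 : a - b = 0 := by
      have := congrArg (ψ (k := k)).symm h3
      rwa [LinearEquiv.symm_apply_apply, map_zero] at this
    exact sub_eq_zero.mp h4
  · exfalso
    apply hw
    have := congrArg (ψ (k := k)).symm h3
    rwa [LinearEquiv.symm_apply_apply, map_zero] at this

lemma Mid_one_tmul_one (w : RR k ⊗[k] RR k) : Mid w ((1:RR k) ⊗ₜ[k] (1:RR k)) = w := by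
  rw [Mid_tmul, ← Algebra.TensorProduct.one_def, one_mul, mul_one]

lemma Mid_mul_right (w z : RR k ⊗[k] RR k) (y : RR k) :
    Mid w (z * ((1:RR k) ⊗ₜ[k] y)) = Mid w z * ((1:RR k) ⊗ₜ[k] y) := by
  induction z with
  | zero => simp
  | tmul p q =>
    rw [Algebra.TensorProduct.tmul_mul_tmul, mul_one, Mid_tmul, Mid_tmul]
    rw [show ((1:RR k) ⊗ₜ[k] (q*y) : RR k ⊗[k] RR k)
        = (1:RR k) ⊗ₜ[k] q * (1:RR k) ⊗ₜ[k] y from by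
      rw [Algebra.TensorProduct.tmul_mul_tmul, one_mul]]
    simp only [mul_assoc]
  | add a b ha hb => rw [add_mul, map_add, map_add, ha, hb, add_mul]

lemma Mid_mul_left (w z : RR k ⊗[k] RR k) (x : RR k) :
    Mid w ((x ⊗ₜ[k] (1:RR k)) * z) = (x ⊗ₜ[k] (1:RR k)) * Mid w z := by
  induction z with
  | zero => simp
  | tmul p q =>
    rw [Algebra.TensorProduct.tmul_mul_tmul, one_mul, Mid_tmul, Mid_tmul]
    rw [show ((x*p : RR k) ⊗ₜ[k] (1:RR k) : RR k ⊗[k] RR k)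
        = x ⊗ₜ[k] (1:RR k) * p ⊗ₜ[k] (1:RR k) from by
      rw [Algebra.TensorProduct.tmul_mul_tmul, mul_one]]
    simp only [mul_assoc]
  | add a b ha hb => rw [mul_add, map_add, map_add, ha, hb, mul_add]

section master
variable (S : FreeAlgebra k ℤ ≃ₐ[k] FreeAlgebra k ℤ)
variable (d : ℤ → (FreeAlgebra k ℤ →ₗ[k] FreeAlgebra k ℤ ⊗[k] FreeAlgebra k ℤ))
variable (D : ℤ → FreeAlgebra k ℤ →ₗ[k] FreeAlgebra k ℤ →ₗ[k]
      FreeAlgebra k ℤ ⊗[k] FreeAlgebra k ℤ)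

lemma D_one (hleibL : ∀ (n : ℤ) (a b c : FreeAlgebra k ℤ),
      D n a (b * c) = D n a b * (1 ⊗ₜ[k] c) + (b ⊗ₜ[k] 1) * D n a c)
    (n : ℤ) (a : FreeAlgebra k ℤ) : D n a (1 : RR k) = 0 := by
  have h := hleibL n a 1 1
  rw [one_mul, ← Algebra.TensorProduct.one_def, one_mul, mul_one] at h
  exact add_eq_left.mp h.symm

lemma master
    (hSι : ∀ i : ℤ, S (FreeAlgebra.ι k i) = FreeAlgebra.ι k (i + 1))
    (hdι : ∀ n i : ℤ, d n (FreeAlgebra.ι k i)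
      = if i = n then (1 : FreeAlgebra k ℤ) ⊗ₜ[k] (1 : FreeAlgebra k ℤ) else 0)
    (hdmul : ∀ (n : ℤ) (a b : FreeAlgebra k ℤ),
      d n (a * b) = (a ⊗ₜ[k] 1) * d n b + d n a * (1 ⊗ₜ[k] b))
    (hses2 : ∀ (n : ℤ) (a b : FreeAlgebra k ℤ),
      D n a (S b)
        = (TensorProduct.congr S.toLinearEquiv S.toLinearEquiv) (D (n - 1) a b))
    (hleibL : ∀ (n : ℤ) (a b c : FreeAlgebra k ℤ),
      D n a (b * c) = D n a b * (1 ⊗ₜ[k] c) + (b ⊗ₜ[k] 1) * D n a c)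
    (m : ℤ) (x : RR k) :
    D m (FreeAlgebra.ι k 0) x
      = ∑ᶠ i : ℤ, Mid (E S i (D (m - i) (FreeAlgebra.ι k 0) (FreeAlgebra.ι k 0)))
          (d i x) := by
  have hsupp : ∀ c : RR k, (Function.support fun i =>
      Mid (E S i (D (m - i) (FreeAlgebra.ι k 0) (FreeAlgebra.ι k 0))) (d i c)).Finite := by
    intro c
    apply Set.Finite.subset (dFin d hdmul hdι c)
    intro i hi
    by_contra hz
    simp only [Function.mem_support, not_not] at hz
    apply hi
    show Mid _ (d i c) = 0
    rw [hz, map_zero]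
  induction x using FreeAlgebra.induction with
  | grade0 r =>
    rw [Algebra.algebraMap_eq_smul_one, map_smul, D_one D hleibL, smul_zero]
    simp only [map_smul, d_one d hdmul, smul_zero, map_zero, finsum_zero]
  | grade1 j =>
    have h0 : (S ^ j) (FreeAlgebra.ι k (0:ℤ)) = FreeAlgebra.ι k j := by
      rw [S_zpow_ι S hSι, zero_add]
    have hLHS : D m (FreeAlgebra.ι k (0:ℤ)) (FreeAlgebra.ι k j)
        = E S j (D (m - j) (FreeAlgebra.ι k (0:ℤ)) (FreeAlgebra.ι k (0:ℤ))) := by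
      conv_lhs => rw [← h0]
      rw [Dses2' S D hses2]
    rw [hLHS, finsum_eq_single _ j ?_]
    · rw [hdι j j, if_pos rfl, Mid_one_tmul_one]
    · intro i hi
      rw [hdι i j, if_neg (fun h => hi (by omega)), map_zero]
  | mul a b ha hb =>
    rw [hleibL m (FreeAlgebra.ι k 0) a b, ha, hb]
    have e1 := lin_map_finsum (LinearMap.mulRight k ((1:RR k) ⊗ₜ[k] b))
      (fun i => Mid (E S i (D (m - i) (FreeAlgebra.ι k 0) (FreeAlgebra.ι k 0))) (d i a))
      (hsupp a)
    simp only [LinearMap.mulRight_apply] at e1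
    have e2 := lin_map_finsum (LinearMap.mulLeft k (a ⊗ₜ[k] (1:RR k)))
      (fun i => Mid (E S i (D (m - i) (FreeAlgebra.ι k 0) (FreeAlgebra.ι k 0))) (d i b))
      (hsupp b)
    simp only [LinearMap.mulLeft_apply] at e2
    rw [e1, e2, ← finsum_add_distrib ?_ ?_]
    · apply finsum_congr
      intro i
      rw [hdmul i a b, map_add, Mid_mul_left, Mid_mul_right, add_comm]
    · apply Set.Finite.subset (hsupp a)
      intro i hi
      by_contra hz
      simp only [Function.mem_support, not_not] at hz
      apply hi
      show Mid _ (d i a) * _ = 0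
      rw [hz, zero_mul]
    · apply Set.Finite.subset (hsupp b)
      intro i hi
      by_contra hz
      simp only [Function.mem_support, not_not] at hz
      apply hi
      show _ * Mid _ (d i b) = 0
      rw [hz, mul_zero]
  | add a b ha hb =>
    rw [map_add, ha, hb, ← finsum_add_distrib (hsupp a) (hsupp b)]
    apply finsum_congr
    intro i
    rw [map_add, map_add]

end master

lemma rtFin
    (d : ℤ → (FreeAlgebra k ℤ →ₗ[k] FreeAlgebra k ℤ ⊗[k] FreeAlgebra k ℤ))
    (hdmul : ∀ (n : ℤ) (a b : FreeAlgebra k ℤ),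
      d n (a * b) = (a ⊗ₜ[k] 1) * d n b + d n a * (1 ⊗ₜ[k] b))
    (hdι : ∀ n i : ℤ, d n (FreeAlgebra.ι k i)
      = if i = n then (1 : FreeAlgebra k ℤ) ⊗ₜ[k] (1 : FreeAlgebra k ℤ) else 0)
    (z : RR k ⊗[k] RR k) :
    (Function.support fun i => (d i).rTensor (FreeAlgebra k ℤ) z).Finite := by
  induction z with
  | zero =>
    apply Set.Finite.subset Set.finite_empty
    intro i hi
    exact absurd (map_zero ((d i).rTensor (FreeAlgebra k ℤ))) hi
  | tmul x y =>
    apply Set.Finite.subset (dFin d hdmul hdι x)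
    intro i hi
    by_contra hz
    simp only [Function.mem_support, not_not] at hz
    apply hi
    show (d i).rTensor (FreeAlgebra k ℤ) (x ⊗ₜ[k] y) = 0
    rw [LinearMap.rTensor_tmul, hz, TensorProduct.zero_tmul]
  | add a b ha hb =>
    apply Set.Finite.subset (ha.union hb)
    intro i hi
    by_contra hab
    simp only [Set.mem_union, Function.mem_support, not_or, not_not] at hab
    apply hi
    show (d i).rTensor (FreeAlgebra k ℤ) (a + b) = 0
    rw [map_add, hab.1, hab.2, add_zero]

section expand
variable (S : FreeAlgebra k ℤ ≃ₐ[k] FreeAlgebra k ℤ)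
variable (d : ℤ → (FreeAlgebra k ℤ →ₗ[k] FreeAlgebra k ℤ ⊗[k] FreeAlgebra k ℤ))
variable (D : ℤ → FreeAlgebra k ℤ →ₗ[k] FreeAlgebra k ℤ →ₗ[k]
      FreeAlgebra k ℤ ⊗[k] FreeAlgebra k ℤ)

lemma DLexp
    (hSι : ∀ i : ℤ, S (FreeAlgebra.ι k i) = FreeAlgebra.ι k (i + 1))
    (hdι : ∀ n i : ℤ, d n (FreeAlgebra.ι k i)
      = if i = n then (1 : FreeAlgebra k ℤ) ⊗ₜ[k] (1 : FreeAlgebra k ℤ) else 0)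
    (hdmul : ∀ (n : ℤ) (a b : FreeAlgebra k ℤ),
      d n (a * b) = (a ⊗ₜ[k] 1) * d n b + d n a * (1 ⊗ₜ[k] b))
    (hses2 : ∀ (n : ℤ) (a b : FreeAlgebra k ℤ),
      D n a (S b)
        = (TensorProduct.congr S.toLinearEquiv S.toLinearEquiv) (D (n - 1) a b))
    (hleibL : ∀ (n : ℤ) (a b c : FreeAlgebra k ℤ),
      D n a (b * c) = D n a b * (1 ⊗ₜ[k] c) + (b ⊗ₜ[k] 1) * D n a c)
    (DL : ℤ → FreeAlgebra k ℤ →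
      (FreeAlgebra k ℤ ⊗[k] FreeAlgebra k ℤ) →ₗ[k]
        FreeAlgebra k ℤ ⊗[k] (FreeAlgebra k ℤ ⊗[k] FreeAlgebra k ℤ))
    (hDL : ∀ (n : ℤ) (a x y : FreeAlgebra k ℤ),
      DL n a (x ⊗ₜ[k] y)
        = (TensorProduct.assoc k (FreeAlgebra k ℤ) (FreeAlgebra k ℤ)
            (FreeAlgebra k ℤ)) ((D n a x) ⊗ₜ[k] y))
    (m : ℤ) (z : RR k ⊗[k] RR k) :
    DL m (FreeAlgebra.ι k 0) z
      = ∑ᶠ i : ℤ, (TensorProduct.assoc k (FreeAlgebra k ℤ) (FreeAlgebra k ℤ)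
            (FreeAlgebra k ℤ))
          ((Mid (E S i (D (m - i) (FreeAlgebra.ι k 0)
              (FreeAlgebra.ι k 0)))).rTensor (FreeAlgebra k ℤ)
            ((d i).rTensor (FreeAlgebra k ℤ) z)) := by
  have hsupp2 : ∀ z : RR k ⊗[k] RR k, (Function.support fun i =>
      (TensorProduct.assoc k (FreeAlgebra k ℤ) (FreeAlgebra k ℤ) (FreeAlgebra k ℤ))
        ((Mid (E S i (D (m - i) (FreeAlgebra.ι k 0)
            (FreeAlgebra.ι k 0)))).rTensor (FreeAlgebra k ℤ)
          ((d i).rTensor (FreeAlgebra k ℤ) z))).Finite := by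
    intro z
    apply Set.Finite.subset (rtFin d hdmul hdι z)
    intro i hi
    by_contra hz
    simp only [Function.mem_support, not_not] at hz
    apply hi
    show (TensorProduct.assoc k _ _ _) ((Mid _).rTensor _ ((d i).rTensor _ z)) = 0
    rw [hz, LinearMap.map_zero, LinearEquiv.map_zero]
  induction z with
  | zero =>
    rw [map_zero]
    rw [finsum_eq_zero_of_forall_eq_zero]
    intro i
    rw [LinearMap.map_zero, LinearMap.map_zero, LinearEquiv.map_zero]
  | tmul x y =>
    rw [hDL m (FreeAlgebra.ι k 0) x y,
      master (S := S) (d := d) (D := D) hSι hdι hdmul hses2 hleibL m x]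
    have hsupp : (Function.support fun i =>
        Mid (E S i (D (m - i) (FreeAlgebra.ι k 0) (FreeAlgebra.ι k 0))) (d i x)).Finite := by
      apply Set.Finite.subset (dFin d hdmul hdι x)
      intro i hi
      by_contra hz
      simp only [Function.mem_support, not_not] at hz
      apply hi
      show Mid _ (d i x) = 0
      rw [hz, map_zero]
    have e := lin_map_finsum
      (((TensorProduct.assoc k (FreeAlgebra k ℤ) (FreeAlgebra k ℤ)
          (FreeAlgebra k ℤ)).toLinearMap).comp
        ((TensorProduct.mk k (FreeAlgebra k ℤ ⊗[k] FreeAlgebra k ℤ)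
          (FreeAlgebra k ℤ)).flip y))
      (fun i => Mid (E S i (D (m - i) (FreeAlgebra.ι k 0) (FreeAlgebra.ι k 0))) (d i x))
      hsupp
    simp only [LinearMap.comp_apply, LinearMap.flip_apply, TensorProduct.mk_apply,
      LinearEquiv.coe_coe] at e
    rw [e]
    apply finsum_congr
    intro i
    rw [LinearMap.rTensor_tmul, LinearMap.rTensor_tmul]
  | add a b ha hb =>
    rw [map_add, ha, hb, ← finsum_add_distrib (hsupp2 a) (hsupp2 b)]
    apply finsum_congr
    intro i
    rw [map_add, map_add, map_add]

end expand

lemma E_apply (S : FreeAlgebra k ℤ ≃ₐ[k] FreeAlgebra k ℤ) (s : ℤ) (z : RR k ⊗[k] RR k) :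
    E S s z = (TensorProduct.congr (S ^ s : FreeAlgebra k ℤ ≃ₐ[k] FreeAlgebra k ℤ).toLinearEquiv
      (S ^ s : FreeAlgebra k ℤ ≃ₐ[k] FreeAlgebra k ℤ).toLinearEquiv) z := rfl

lemma transfer (S : FreeAlgebra k ℤ ≃ₐ[k] FreeAlgebra k ℤ)
    (d : ℤ → (FreeAlgebra k ℤ →ₗ[k] FreeAlgebra k ℤ ⊗[k] FreeAlgebra k ℤ))
    (hSι : ∀ i : ℤ, S (FreeAlgebra.ι k i) = FreeAlgebra.ι k (i + 1))
    (hdι : ∀ n i : ℤ, d n (FreeAlgebra.ι k i)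
      = if i = n then (1 : FreeAlgebra k ℤ) ⊗ₜ[k] (1 : FreeAlgebra k ℤ) else 0)
    (hdmul : ∀ (n : ℤ) (a b : FreeAlgebra k ℤ),
      d n (a * b) = (a ⊗ₜ[k] 1) * d n b + d n a * (1 ⊗ₜ[k] b))
    (n i : ℤ) (z : RR k ⊗[k] RR k) :
    LinearMap.lTensor (FreeAlgebra k ℤ) (d i)
        ((TensorProduct.congr
            (S ^ n : FreeAlgebra k ℤ ≃ₐ[k] FreeAlgebra k ℤ).toLinearEquiv
            (S ^ n : FreeAlgebra k ℤ ≃ₐ[k] FreeAlgebra k ℤ).toLinearEquiv)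
          ((TensorProduct.comm k (FreeAlgebra k ℤ) (FreeAlgebra k ℤ)) z))
      = (TensorProduct.map
            (S ^ n : FreeAlgebra k ℤ ≃ₐ[k] FreeAlgebra k ℤ).toLinearMap
            (E S n).toLinearMap)
          ((TensorProduct.comm k (FreeAlgebra k ℤ ⊗[k] FreeAlgebra k ℤ)
              (FreeAlgebra k ℤ))
            (LinearMap.rTensor (FreeAlgebra k ℤ) (d (i - n)) z)) := by
  induction z with
  | zero =>
    rw [LinearEquiv.map_zero, LinearEquiv.map_zero, LinearMap.map_zero,
      LinearMap.map_zero, LinearEquiv.map_zero, LinearMap.map_zero]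
  | tmul x y =>
    rw [TensorProduct.comm_tmul, TensorProduct.congr_tmul, LinearMap.lTensor_tmul,
      LinearMap.rTensor_tmul, TensorProduct.comm_tmul, TensorProduct.map_tmul]
    rw [show ((S ^ n : FreeAlgebra k ℤ ≃ₐ[k] FreeAlgebra k ℤ).toLinearEquiv x)
        = (S ^ n : FreeAlgebra k ℤ ≃ₐ[k] FreeAlgebra k ℤ) x from rfl,
      dS' d S hSι hdι hdmul n i x]
    rfl
  | add a b ha hb =>
    rw [LinearEquiv.map_add, LinearEquiv.map_add, LinearMap.map_add,
      LinearMap.map_add, LinearEquiv.map_add, LinearMap.map_add, ha, hb]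

lemma MC
    (S : FreeAlgebra k ℤ ≃ₐ[k] FreeAlgebra k ℤ)
    (hSι : ∀ i : ℤ, S (FreeAlgebra.ι k i) = FreeAlgebra.ι k (i + 1))
    (d : ℤ → (FreeAlgebra k ℤ →ₗ[k] FreeAlgebra k ℤ ⊗[k] FreeAlgebra k ℤ))
    (hdι : ∀ n i : ℤ, d n (FreeAlgebra.ι k i)
      = if i = n then (1 : FreeAlgebra k ℤ) ⊗ₜ[k] (1 : FreeAlgebra k ℤ) else 0)
    (hdmul : ∀ (n : ℤ) (a b : FreeAlgebra k ℤ),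
      d n (a * b) = (a ⊗ₜ[k] 1) * d n b + d n a * (1 ⊗ₜ[k] b))
    (D : ℤ → FreeAlgebra k ℤ →ₗ[k] FreeAlgebra k ℤ →ₗ[k]
      FreeAlgebra k ℤ ⊗[k] FreeAlgebra k ℤ)
    (hfin : ∀ a b : FreeAlgebra k ℤ, {n : ℤ | D n a b ≠ 0}.Finite)
    (hses2 : ∀ (n : ℤ) (a b : FreeAlgebra k ℤ),
      D n a (S b)
        = (TensorProduct.congr S.toLinearEquiv S.toLinearEquiv) (D (n - 1) a b))
    (hleibL : ∀ (n : ℤ) (a b c : FreeAlgebra k ℤ),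
      D n a (b * c) = D n a b * (1 ⊗ₜ[k] c) + (b ⊗ₜ[k] 1) * D n a c)
    (DL DR DT : ℤ → FreeAlgebra k ℤ →
      (FreeAlgebra k ℤ ⊗[k] FreeAlgebra k ℤ) →ₗ[k]
        FreeAlgebra k ℤ ⊗[k] (FreeAlgebra k ℤ ⊗[k] FreeAlgebra k ℤ))
    (hDL : ∀ (n : ℤ) (a x y : FreeAlgebra k ℤ),
      DL n a (x ⊗ₜ[k] y)
        = (TensorProduct.assoc k (FreeAlgebra k ℤ) (FreeAlgebra k ℤ)
            (FreeAlgebra k ℤ)) ((D n a x) ⊗ₜ[k] y))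
    (hjac : ∀ (m n : ℤ) (a b c : FreeAlgebra k ℤ),
      DL m a (D n b c) - DR n b (D m a c) - DT n c (D (m - n) a b) = 0) :
    ∀ (n i : ℤ), ((i < 0 ∧ i < n) ∨ (0 < i ∧ n < i)) →
      LinearMap.rTensor (FreeAlgebra k ℤ) (d i)
        (D n (FreeAlgebra.ι k (0:ℤ)) (FreeAlgebra.ι k (0:ℤ))) = 0 := by
  by_cases hT0 : ∀ m : ℤ, D m (FreeAlgebra.ι k (0:ℤ)) (FreeAlgebra.ι k (0:ℤ)) = 0
  · intro n i _
    rw [hT0 n, LinearMap.map_zero]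
  push_neg at hT0
  obtain ⟨m0, hm0⟩ := hT0
  have hTfin := hfin (FreeAlgebra.ι k (0:ℤ)) (FreeAlgebra.ι k (0:ℤ))
  have hne : hTfin.toFinset.Nonempty :=
    ⟨m0, by rw [Set.Finite.mem_toFinset]; exact hm0⟩
  set tmin := hTfin.toFinset.min' hne with htmin
  set tmax := hTfin.toFinset.max' hne with htmax
  have htmin_mem : D tmin (FreeAlgebra.ι k (0:ℤ)) (FreeAlgebra.ι k (0:ℤ)) ≠ 0 := by
    have := hTfin.toFinset.min'_mem hne
    rwa [Set.Finite.mem_toFinset] at this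
  have htmax_mem : D tmax (FreeAlgebra.ι k (0:ℤ)) (FreeAlgebra.ι k (0:ℤ)) ≠ 0 := by
    have := hTfin.toFinset.max'_mem hne
    rwa [Set.Finite.mem_toFinset] at this
  have htmin_le : ∀ s : ℤ, D s (FreeAlgebra.ι k (0:ℤ)) (FreeAlgebra.ι k (0:ℤ)) ≠ 0 →
      tmin ≤ s := fun s hs =>
    Finset.min'_le _ s (by rw [Set.Finite.mem_toFinset]; exact hs)
  have hle_tmax : ∀ s : ℤ, D s (FreeAlgebra.ι k (0:ℤ)) (FreeAlgebra.ι k (0:ℤ)) ≠ 0 →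
      s ≤ tmax := fun s hs =>
    Finset.le_max' _ s (by rw [Set.Finite.mem_toFinset]; exact hs)
  have hUfin : (⋃ nn ∈ (hTfin.toFinset : Set ℤ), Function.support fun i =>
      LinearMap.rTensor (FreeAlgebra k ℤ) (d i)
        (D nn (FreeAlgebra.ι k (0:ℤ)) (FreeAlgebra.ι k (0:ℤ)))).Finite :=
    Set.Finite.biUnion (hTfin.toFinset.finite_toSet)
      (fun nn _ => rtFin d hdmul hdι _)
  obtain ⟨Blo, hBlo⟩ := hUfin.bddBelow
  obtain ⟨Bhi, hBhi⟩ := hUfin.bddAbove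
  have hB : ∀ i n : ℤ, i < Blo →
      LinearMap.rTensor (FreeAlgebra k ℤ) (d i)
        (D n (FreeAlgebra.ι k (0:ℤ)) (FreeAlgebra.ι k (0:ℤ))) = 0 := by
    intro i n hi
    by_contra hz
    have hn : D n (FreeAlgebra.ι k (0:ℤ)) (FreeAlgebra.ι k (0:ℤ)) ≠ 0 :=
      fun h => hz (by rw [h, LinearMap.map_zero])
    have hmem : i ∈ ⋃ nn ∈ (hTfin.toFinset : Set ℤ), Function.support fun i =>
        LinearMap.rTensor (FreeAlgebra k ℤ) (d i)
          (D nn (FreeAlgebra.ι k (0:ℤ)) (FreeAlgebra.ι k (0:ℤ))) :=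
      Set.mem_biUnion (by rw [Finset.mem_coe, Set.Finite.mem_toFinset]; exact hn) hz
    have := hBlo hmem
    omega
  have hB' : ∀ i n : ℤ, Bhi < i →
      LinearMap.rTensor (FreeAlgebra k ℤ) (d i)
        (D n (FreeAlgebra.ι k (0:ℤ)) (FreeAlgebra.ι k (0:ℤ))) = 0 := by
    intro i n hi
    by_contra hz
    have hn : D n (FreeAlgebra.ι k (0:ℤ)) (FreeAlgebra.ι k (0:ℤ)) ≠ 0 :=
      fun h => hz (by rw [h, LinearMap.map_zero])
    have hmem : i ∈ ⋃ nn ∈ (hTfin.toFinset : Set ℤ), Function.support fun i =>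
        LinearMap.rTensor (FreeAlgebra k ℤ) (d i)
          (D nn (FreeAlgebra.ι k (0:ℤ)) (FreeAlgebra.ι k (0:ℤ))) :=
      Set.mem_biUnion (by rw [Finset.mem_coe, Set.Finite.mem_toFinset]; exact hn) hz
    have := hBhi hmem
    omega
  have step_lo : ∀ i : ℤ,
      (∀ i' n' : ℤ, i' < i → i' < 0 → i' < n' →
        LinearMap.rTensor (FreeAlgebra k ℤ) (d i')
          (D n' (FreeAlgebra.ι k (0:ℤ)) (FreeAlgebra.ι k (0:ℤ))) = 0) →
      ∀ n : ℤ, i < 0 → i < n →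
        LinearMap.rTensor (FreeAlgebra k ℤ) (d i)
          (D n (FreeAlgebra.ι k (0:ℤ)) (FreeAlgebra.ι k (0:ℤ))) = 0 := by
    intro i IH n hi0 hin
    have hfm : D (tmin + i) (FreeAlgebra.ι k (0:ℤ)) (FreeAlgebra.ι k (0:ℤ)) = 0 := by
      by_contra hz
      have := htmin_le _ hz
      omega
    have hfmn : D (tmin + i - n) (FreeAlgebra.ι k (0:ℤ)) (FreeAlgebra.ι k (0:ℤ)) = 0 := by
      by_contra hz
      have := htmin_le _ hz
      omega
    have hj := hjac (tmin + i) n (FreeAlgebra.ι k (0:ℤ)) (FreeAlgebra.ι k (0:ℤ))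
      (FreeAlgebra.ι k (0:ℤ))
    rw [hfm, hfmn, LinearMap.map_zero, LinearMap.map_zero, sub_zero, sub_zero] at hj
    rw [DLexp (S := S) (d := d) (D := D) hSι hdι hdmul hses2 hleibL DL hDL (tmin + i)
      (D n (FreeAlgebra.ι k (0:ℤ)) (FreeAlgebra.ι k (0:ℤ)))] at hj
    have hside : ∀ i' : ℤ, i' ≠ i →
        (TensorProduct.assoc k (FreeAlgebra k ℤ) (FreeAlgebra k ℤ) (FreeAlgebra k ℤ))
          ((Mid (E S i' (D (tmin + i - i') (FreeAlgebra.ι k 0)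
              (FreeAlgebra.ι k 0)))).rTensor (FreeAlgebra k ℤ)
            ((d i').rTensor (FreeAlgebra k ℤ)
              (D n (FreeAlgebra.ι k (0:ℤ)) (FreeAlgebra.ι k (0:ℤ))))) = 0 := by
      intro i' hi'
      by_cases hft : D (tmin + i - i') (FreeAlgebra.ι k (0:ℤ)) (FreeAlgebra.ι k (0:ℤ)) = 0
      · rw [hft, LinearEquiv.map_zero, Mid_zero, LinearMap.rTensor_zero,
          LinearMap.zero_apply, LinearEquiv.map_zero]
      · have h1 : tmin ≤ tmin + i - i' := htmin_le _ hft
        rw [IH i' n (by omega) (by omega) (by omega), LinearMap.map_zero,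
          LinearEquiv.map_zero]
    have key : (TensorProduct.assoc k (FreeAlgebra k ℤ) (FreeAlgebra k ℤ)
          (FreeAlgebra k ℤ))
        ((Mid (E S i (D (tmin + i - i) (FreeAlgebra.ι k 0)
            (FreeAlgebra.ι k 0)))).rTensor (FreeAlgebra k ℤ)
          ((d i).rTensor (FreeAlgebra k ℤ)
            (D n (FreeAlgebra.ι k (0:ℤ)) (FreeAlgebra.ι k (0:ℤ))))) = 0 :=
      (finsum_eq_single _ i hside).symm.trans hj
    have hw : E S i (D (tmin + i - i) (FreeAlgebra.ι k 0) (FreeAlgebra.ι k 0)) ≠ 0 := by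
      rw [show tmin + i - i = tmin from by omega]
      intro h
      exact htmin_mem ((LinearEquiv.map_eq_zero_iff _).mp h)
    have h3 := (LinearEquiv.map_eq_zero_iff _).mp key
    have hinj := Module.Flat.rTensor_preserves_injective_linearMap
      (M := FreeAlgebra k ℤ)
      (Mid (E S i (D (tmin + i - i) (FreeAlgebra.ι k 0) (FreeAlgebra.ι k 0))))
      (Mid_injective hw)
    exact hinj (h3.trans (LinearMap.map_zero _).symm)
  have step_hi : ∀ i : ℤ,
      (∀ i' n' : ℤ, i < i' → 0 < i' → n' < i' →
        LinearMap.rTensor (FreeAlgebra k ℤ) (d i')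
          (D n' (FreeAlgebra.ι k (0:ℤ)) (FreeAlgebra.ι k (0:ℤ))) = 0) →
      ∀ n : ℤ, 0 < i → n < i →
        LinearMap.rTensor (FreeAlgebra k ℤ) (d i)
          (D n (FreeAlgebra.ι k (0:ℤ)) (FreeAlgebra.ι k (0:ℤ))) = 0 := by
    intro i IH n hi0 hin
    have hfm : D (tmax + i) (FreeAlgebra.ι k (0:ℤ)) (FreeAlgebra.ι k (0:ℤ)) = 0 := by
      by_contra hz
      have := hle_tmax _ hz
      omega
    have hfmn : D (tmax + i - n) (FreeAlgebra.ι k (0:ℤ)) (FreeAlgebra.ι k (0:ℤ)) = 0 := by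
      by_contra hz
      have := hle_tmax _ hz
      omega
    have hj := hjac (tmax + i) n (FreeAlgebra.ι k (0:ℤ)) (FreeAlgebra.ι k (0:ℤ))
      (FreeAlgebra.ι k (0:ℤ))
    rw [hfm, hfmn, LinearMap.map_zero, LinearMap.map_zero, sub_zero, sub_zero] at hj
    rw [DLexp (S := S) (d := d) (D := D) hSι hdι hdmul hses2 hleibL DL hDL (tmax + i)
      (D n (FreeAlgebra.ι k (0:ℤ)) (FreeAlgebra.ι k (0:ℤ)))] at hj
    have hside : ∀ i' : ℤ, i' ≠ i →
        (TensorProduct.assoc k (FreeAlgebra k ℤ) (FreeAlgebra k ℤ) (FreeAlgebra k ℤ))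
          ((Mid (E S i' (D (tmax + i - i') (FreeAlgebra.ι k 0)
              (FreeAlgebra.ι k 0)))).rTensor (FreeAlgebra k ℤ)
            ((d i').rTensor (FreeAlgebra k ℤ)
              (D n (FreeAlgebra.ι k (0:ℤ)) (FreeAlgebra.ι k (0:ℤ))))) = 0 := by
      intro i' hi'
      by_cases hft : D (tmax + i - i') (FreeAlgebra.ι k (0:ℤ)) (FreeAlgebra.ι k (0:ℤ)) = 0
      · rw [hft, LinearEquiv.map_zero, Mid_zero, LinearMap.rTensor_zero,
          LinearMap.zero_apply, LinearEquiv.map_zero]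
      · have h1 : tmax + i - i' ≤ tmax := hle_tmax _ hft
        rw [IH i' n (by omega) (by omega) (by omega), LinearMap.map_zero,
          LinearEquiv.map_zero]
    have key : (TensorProduct.assoc k (FreeAlgebra k ℤ) (FreeAlgebra k ℤ)
          (FreeAlgebra k ℤ))
        ((Mid (E S i (D (tmax + i - i) (FreeAlgebra.ι k 0)
            (FreeAlgebra.ι k 0)))).rTensor (FreeAlgebra k ℤ)
          ((d i).rTensor (FreeAlgebra k ℤ)
            (D n (FreeAlgebra.ι k (0:ℤ)) (FreeAlgebra.ι k (0:ℤ))))) = 0 :=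
      (finsum_eq_single _ i hside).symm.trans hj
    have hw : E S i (D (tmax + i - i) (FreeAlgebra.ι k 0) (FreeAlgebra.ι k 0)) ≠ 0 := by
      rw [show tmax + i - i = tmax from by omega]
      intro h
      exact htmax_mem ((LinearEquiv.map_eq_zero_iff _).mp h)
    have h3 := (LinearEquiv.map_eq_zero_iff _).mp key
    have hinj := Module.Flat.rTensor_preserves_injective_linearMap
      (M := FreeAlgebra k ℤ)
      (Mid (E S i (D (tmax + i - i) (FreeAlgebra.ι k 0) (FreeAlgebra.ι k 0))))
      (Mid_injective hw)
    exact hinj (h3.trans (LinearMap.map_zero _).symm)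
  have lower : ∀ i n : ℤ, i < 0 → i < n →
      LinearMap.rTensor (FreeAlgebra k ℤ) (d i)
        (D n (FreeAlgebra.ι k (0:ℤ)) (FreeAlgebra.ι k (0:ℤ))) = 0 := by
    have main : ∀ K : ℕ, ∀ i : ℤ, i ≤ Blo - 1 + K → ∀ n : ℤ, i < 0 → i < n →
        LinearMap.rTensor (FreeAlgebra k ℤ) (d i)
          (D n (FreeAlgebra.ι k (0:ℤ)) (FreeAlgebra.ι k (0:ℤ))) = 0 := by
      intro K
      induction K with
      | zero => intro i hi n _ _; exact hB i n (by omega)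
      | succ K IHK =>
        intro i hi n hi0 hin
        by_cases hlt : i ≤ Blo - 1 + K
        · exact IHK i hlt n hi0 hin
        · exact step_lo i (fun i' n' h1 h2 h3 => IHK i' (by omega) n' h2 h3) n hi0 hin
    intro i n h1 h2
    exact main (i - (Blo - 1)).toNat i (by omega) n h1 h2
  have upper : ∀ i n : ℤ, 0 < i → n < i →
      LinearMap.rTensor (FreeAlgebra k ℤ) (d i)
        (D n (FreeAlgebra.ι k (0:ℤ)) (FreeAlgebra.ι k (0:ℤ))) = 0 := by
    have main : ∀ K : ℕ, ∀ i : ℤ, Bhi + 1 - K ≤ i → ∀ n : ℤ, 0 < i → n < i →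
        LinearMap.rTensor (FreeAlgebra k ℤ) (d i)
          (D n (FreeAlgebra.ι k (0:ℤ)) (FreeAlgebra.ι k (0:ℤ))) = 0 := by
      intro K
      induction K with
      | zero => intro i hi n _ _; exact hB' i n (by omega)
      | succ K IHK =>
        intro i hi n hi0 hin
        by_cases hlt : Bhi + 1 - K ≤ i
        · exact IHK i hlt n hi0 hin
        · exact step_hi i (fun i' n' h1 h2 h3 => IHK i' (by omega) n' h2 h3) n hi0 hin
    intro i n h1 h2
    exact main (Bhi + 1 - i).toNat i (by omega) n h1 h2
  intro n i hcase
  rcases hcase with ⟨h1, h2⟩ | ⟨h1, h2⟩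
  · exact lower i n h1 h2
  · exact upper i n h1 h2

end Stmt14Aux

/-- On the algebra `ℛ = k⟨uᵢ : i ∈ ℤ⟩` of non-commutative difference
polynomials (with `S(uᵢ) = u_{i+1}` and 2-fold partial derivatives `d i = ∂/∂uᵢ`),
any skewsymmetric double multiplicative λ-bracket (encoded by its coefficients
`D n a b`, with `⟨⟨u_λ u⟩⟩ = Σ f_N λᴺ`, `f_N = D N u u`, `u = u₀`) satisfying the
Jacobi identity has `f_N` depending only on `u, u₁, …, u_N` for `N ≥ 0`: the left
and right extended partial derivatives `∂/∂uᵢ` of `f_N` vanish for `i ∉ {0,…,N}`. -/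
theorem stmt14 {k : Type*} [Field k] [CharZero k]
    (S : FreeAlgebra k ℤ ≃ₐ[k] FreeAlgebra k ℤ)
    (hSι : ∀ i : ℤ, S (FreeAlgebra.ι k i) = FreeAlgebra.ι k (i + 1))
    (d : ℤ → (FreeAlgebra k ℤ →ₗ[k] FreeAlgebra k ℤ ⊗[k] FreeAlgebra k ℤ))
    (hdι : ∀ n i : ℤ, d n (FreeAlgebra.ι k i)
      = if i = n then (1 : FreeAlgebra k ℤ) ⊗ₜ[k] (1 : FreeAlgebra k ℤ) else 0)
    (hdmul : ∀ (n : ℤ) (a b : FreeAlgebra k ℤ),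
      d n (a * b) = (a ⊗ₜ[k] 1) * d n b + d n a * (1 ⊗ₜ[k] b))
    (D : ℤ → FreeAlgebra k ℤ →ₗ[k] FreeAlgebra k ℤ →ₗ[k]
      FreeAlgebra k ℤ ⊗[k] FreeAlgebra k ℤ)
    (hfin : ∀ a b : FreeAlgebra k ℤ, {n : ℤ | D n a b ≠ 0}.Finite)
    (hses1 : ∀ (n : ℤ) (a b : FreeAlgebra k ℤ), D n (S a) b = D (n + 1) a b)
    (hses2 : ∀ (n : ℤ) (a b : FreeAlgebra k ℤ),
      D n a (S b)
        = (TensorProduct.congr S.toLinearEquiv S.toLinearEquiv) (D (n - 1) a b))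
    (hleibL : ∀ (n : ℤ) (a b c : FreeAlgebra k ℤ),
      D n a (b * c) = D n a b * (1 ⊗ₜ[k] c) + (b ⊗ₜ[k] 1) * D n a c)
    (hleibR : ∀ (n : ℤ) (a b c : FreeAlgebra k ℤ),
      D n (a * b) c
        = D n a c * (((S ^ n : FreeAlgebra k ℤ ≃ₐ[k] FreeAlgebra k ℤ) b) ⊗ₜ[k] 1)
          + (1 ⊗ₜ[k] ((S ^ n : FreeAlgebra k ℤ ≃ₐ[k] FreeAlgebra k ℤ) a)) * D n b c)
    (hskew : ∀ (n : ℤ) (a b : FreeAlgebra k ℤ),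
      D n a b
        = - (TensorProduct.congr
              (S ^ n : FreeAlgebra k ℤ ≃ₐ[k] FreeAlgebra k ℤ).toLinearEquiv
              (S ^ n : FreeAlgebra k ℤ ≃ₐ[k] FreeAlgebra k ℤ).toLinearEquiv)
            ((TensorProduct.comm k (FreeAlgebra k ℤ) (FreeAlgebra k ℤ)) (D (-n) b a)))
    (DL DR DT : ℤ → FreeAlgebra k ℤ →
      (FreeAlgebra k ℤ ⊗[k] FreeAlgebra k ℤ) →ₗ[k]
        FreeAlgebra k ℤ ⊗[k] (FreeAlgebra k ℤ ⊗[k] FreeAlgebra k ℤ))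
    (hDL : ∀ (n : ℤ) (a x y : FreeAlgebra k ℤ),
      DL n a (x ⊗ₜ[k] y)
        = (TensorProduct.assoc k (FreeAlgebra k ℤ) (FreeAlgebra k ℤ)
            (FreeAlgebra k ℤ)) ((D n a x) ⊗ₜ[k] y))
    (hDR : ∀ (n : ℤ) (a x y : FreeAlgebra k ℤ),
      DR n a (x ⊗ₜ[k] y) = x ⊗ₜ[k] (D n a y))
    (hDT : ∀ (n : ℤ) (c x y : FreeAlgebra k ℤ),
      DT n c (x ⊗ₜ[k] y)
        = (TensorProduct.congr (LinearEquiv.refl k (FreeAlgebra k ℤ))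
            (TensorProduct.comm k (FreeAlgebra k ℤ) (FreeAlgebra k ℤ)))
            ((TensorProduct.assoc k (FreeAlgebra k ℤ) (FreeAlgebra k ℤ)
              (FreeAlgebra k ℤ))
              ((D n x c) ⊗ₜ[k]
                ((S ^ n : FreeAlgebra k ℤ ≃ₐ[k] FreeAlgebra k ℤ) y))))
    (hjac : ∀ (m n : ℤ) (a b c : FreeAlgebra k ℤ),
      DL m a (D n b c) - DR n b (D m a c) - DT n c (D (m - n) a b) = 0) :
    ∀ N : ℤ, 0 ≤ N → ∀ i : ℤ, i < 0 ∨ N < i →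
      LinearMap.rTensor (FreeAlgebra k ℤ) (d i)
          (D N (FreeAlgebra.ι k (0 : ℤ)) (FreeAlgebra.ι k (0 : ℤ))) = 0 ∧
      LinearMap.lTensor (FreeAlgebra k ℤ) (d i)
          (D N (FreeAlgebra.ι k (0 : ℤ)) (FreeAlgebra.ι k (0 : ℤ))) = 0 := by
  intro N hN i hi
  constructor
  · exact Stmt14Aux.MC S hSι d hdι hdmul D hfin hses2 hleibL DL DR DT hDL hjac N i
      (by rcases hi with h | h
          · exact Or.inl ⟨h, by omega⟩
          · exact Or.inr ⟨by omega, h⟩)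
  · have h2 : LinearMap.rTensor (FreeAlgebra k ℤ) (d (i - N))
        (D (-N) (FreeAlgebra.ι k (0:ℤ)) (FreeAlgebra.ι k (0:ℤ))) = 0 :=
      Stmt14Aux.MC S hSι d hdι hdmul D hfin hses2 hleibL DL DR DT hDL hjac (-N) (i - N)
        (by rcases hi with h | h
            · exact Or.inl ⟨by omega, by omega⟩
            · exact Or.inr ⟨by omega, by omega⟩)
    rw [hskew N (FreeAlgebra.ι k (0:ℤ)) (FreeAlgebra.ι k (0:ℤ)), LinearMap.map_neg,
      Stmt14Aux.transfer S d hSι hdι hdmul N i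
        (D (-N) (FreeAlgebra.ι k (0:ℤ)) (FreeAlgebra.ι k (0:ℤ))),
      h2, LinearEquiv.map_zero, LinearMap.map_zero, neg_zero]
end

section
/- Let 𝒱 be a unital associative algebra with automorphism S, equipped with a double multiplicative λ-bracket ⟨⟨−_λ−⟩⟩, and define {a_λ b} := m(⟨⟨a_λ b⟩⟩) where m: 𝒱⊗𝒱 → 𝒱 is multiplication. Then: (a) {[𝒱,𝒱]_λ 𝒱} = 0, i.e. {(ab−ba)_λ c} = 0 for all a,b,c ∈ 𝒱; and (b) {𝒱_λ [𝒱,𝒱]} ⊆ [𝒱,𝒱][λ,λ⁻¹], i.e. {a_λ (bc−cb)} = [b, {a_λ c}] + [{a_λ b}, c] for all a,b,c. -/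
open TensorProduct


private lemma aux_mid {k V : Type*} [Field k] [Ring V] [Algebra k V]
    (w : V) (t : V ⊗[k] V) :
    (LinearMap.mul' k V) (t * (w ⊗ₜ[k] 1)) = (LinearMap.mul' k V) ((1 ⊗ₜ[k] w) * t) := by
  induction t using TensorProduct.induction_on with
  | zero => simp
  | tmul u v =>
      simp [Algebra.TensorProduct.tmul_mul_tmul, mul_assoc]
  | add x y hx hy =>
      simp [add_mul, mul_add, hx, hy]

private lemma aux_right {k V : Type*} [Field k] [Ring V] [Algebra k V]
    (c : V) (t : V ⊗[k] V) :
    (LinearMap.mul' k V) (t * (1 ⊗ₜ[k] c)) = (LinearMap.mul' k V) t * c := by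
  induction t using TensorProduct.induction_on with
  | zero => simp
  | tmul u v =>
      simp [Algebra.TensorProduct.tmul_mul_tmul, mul_assoc]
  | add x y hx hy =>
      simp [add_mul, hx, hy]

private lemma aux_left {k V : Type*} [Field k] [Ring V] [Algebra k V]
    (b : V) (t : V ⊗[k] V) :
    (LinearMap.mul' k V) ((b ⊗ₜ[k] 1) * t) = b * (LinearMap.mul' k V) t := by
  induction t using TensorProduct.induction_on with
  | zero => simp
  | tmul u v =>
      simp [Algebra.TensorProduct.tmul_mul_tmul, mul_assoc]
  | add x y hx hy =>
      simp [mul_add, hx, hy]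

/-- For a double multiplicative λ-bracket on `(V, S)` (encoded by its
coefficients `D n a b`) and `{a_λ b} := m(⟨⟨a_λ b⟩⟩)` (with `m` the multiplication
map, applied coefficientwise), one has:
(a) `{(ab - ba)_λ c} = 0`, and
(b) `{a_λ (bc - cb)} = [b, {a_λ c}] + [{a_λ b}, c]`. -/
theorem stmt18 {k V : Type*} [Field k] [Ring V] [Algebra k V]
    (S : V ≃ₐ[k] V)
    (D : ℤ → V →ₗ[k] V →ₗ[k] V ⊗[k] V)
    (hses1 : ∀ (n : ℤ) (a b : V), D n (S a) b = D (n + 1) a b)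
    (hses2 : ∀ (n : ℤ) (a b : V),
      D n a (S b)
        = (TensorProduct.congr S.toLinearEquiv S.toLinearEquiv) (D (n - 1) a b))
    (hleibL : ∀ (n : ℤ) (a b c : V),
      D n a (b * c) = D n a b * (1 ⊗ₜ[k] c) + (b ⊗ₜ[k] 1) * D n a c)
    (hleibR : ∀ (n : ℤ) (a b c : V),
      D n (a * b) c
        = D n a c * (((S ^ n : V ≃ₐ[k] V) b) ⊗ₜ[k] 1)
          + (1 ⊗ₜ[k] ((S ^ n : V ≃ₐ[k] V) a)) * D n b c) :
    -- (a)  {[𝒱,𝒱]_λ 𝒱} = 0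
    (∀ (n : ℤ) (a b c : V),
      (LinearMap.mul' k V) (D n (a * b - b * a) c) = 0) ∧
    -- (b)  {𝒱_λ [𝒱,𝒱]} ⊆ [𝒱,𝒱][λ,λ⁻¹]
    (∀ (n : ℤ) (a b c : V),
      (LinearMap.mul' k V) (D n a (b * c - c * b))
        = (b * (LinearMap.mul' k V) (D n a c)
            - (LinearMap.mul' k V) (D n a c) * b)
          + ((LinearMap.mul' k V) (D n a b) * c
            - c * (LinearMap.mul' k V) (D n a b))) := by
  constructor
  · intro n a b c
    have h1 := hleibR n a b c
    have h2 := hleibR n b a c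
    simp only [map_sub, LinearMap.sub_apply, h1, h2, map_add]
    rw [aux_mid, aux_mid]
    abel
  · intro n a b c
    have h1 := hleibL n a b c
    have h2 := hleibL n a c b
    simp only [map_sub, LinearMap.sub_apply, h1, h2, map_add]
    rw [aux_right, aux_right, aux_left, aux_left]
    abel
end
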